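/- arXiv:1912.03066 — 7 statements merged into one kernel-verified Lean document; each statement's English description precedes it below -/
import Mathlib

section
/- For all integers p, q ≥ 0 and i ≥ 1, one has (3^{i-1} · (i-1)! · (3i+2q-1)!) / ((2q)! · (3i-1)! · (3i+2+2q+2p)!) ≤ (3^i · i! ) / ((p+q+1) · (2p+2q)! · (3i+2)!). -/
open Nat

lemma key_fact_ineq (k p q : ℕ) :
    (p+q+1) * ((2*p+2*q)! * ((k+5)! * (k+2*q+2)!)) ≤
      (k+3) * ((2*q)! * ((k+2)! * (k+2*p+2*q+5)!)) := by
  induction p with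
  | zero =>
    simp only [Nat.mul_zero, Nat.zero_add, Nat.add_zero, Nat.zero_mul]
    have e1 : (k+5)! = (k+5)*((k+4)*((k+3)*(k+2)!)) := by
      rw [show k+5 = (k+4)+1 from rfl, Nat.factorial_succ,
        show k+4 = (k+3)+1 from rfl, Nat.factorial_succ,
        show k+3 = (k+2)+1 from rfl, Nat.factorial_succ]
    have e2 : (k+2*q+5)! = (k+2*q+5)*((k+2*q+4)*((k+2*q+3)*(k+2*q+2)!)) := by
      rw [show k+2*q+5 = (k+2*q+4)+1 from rfl, Nat.factorial_succ,
        show k+2*q+4 = (k+2*q+3)+1 from rfl, Nat.factorial_succ,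
        show k+2*q+3 = (k+2*q+2)+1 from rfl, Nat.factorial_succ]
    have hs : (q+1)*((k+5)*((k+4)*(k+3))) ≤ (k+2*q+3)*((k+2*q+5)*((k+2*q+4)*(k+3))) := by
      gcongr <;> omega
    calc (q+1) * ((2*q)! * ((k+5)! * (k+2*q+2)!))
        = ((q+1)*((k+5)*((k+4)*(k+3)))) * ((2*q)! * ((k+2)! * (k+2*q+2)!)) := by
          rw [e1]; ring
      _ ≤ ((k+2*q+3)*((k+2*q+5)*((k+2*q+4)*(k+3)))) * ((2*q)! * ((k+2)! * (k+2*q+2)!)) :=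
          mul_le_mul_left hs _
      _ = (k+3) * ((2*q)! * ((k+2)! * (k+0+2*q+5)!)) := by rw [show k+0+2*q+5 = k+2*q+5 from by ring, e2]; ring
  | succ p ih =>
    refine Nat.le_of_mul_le_mul_left ?_ (show 0 < p+q+1 by omega)
    have e1 : (2*(p+1)+2*q)! = (2*p+2*q+2)*((2*p+2*q+1)*(2*p+2*q)!) := by
      rw [show 2*(p+1)+2*q = (2*p+2*q+1)+1 from by ring, Nat.factorial_succ,
        show 2*p+2*q+1 = (2*p+2*q)+1 from rfl, Nat.factorial_succ]
    have e2 : (k+2*(p+1)+2*q+5)! = (k+2*p+2*q+7)*((k+2*p+2*q+6)*(k+2*p+2*q+5)!) := by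
      rw [show k+2*(p+1)+2*q+5 = (k+2*p+2*q+6)+1 from by ring, Nat.factorial_succ,
        show k+2*p+2*q+6 = (k+2*p+2*q+5)+1 from rfl, Nat.factorial_succ]
    have h1 : (p+q+2)*(2*p+2*q+1) ≤ (p+q+1)*(2*p+2*q+6) := by nlinarith
    have hs : (p+q+2)*((2*p+2*q+2)*(2*p+2*q+1)) ≤ (p+q+1)*((k+2*p+2*q+7)*(k+2*p+2*q+6)) := by
      calc (p+q+2)*((2*p+2*q+2)*(2*p+2*q+1)) = ((p+q+2)*(2*p+2*q+1))*(2*p+2*q+2) := by ring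
        _ ≤ ((p+q+1)*(2*p+2*q+6))*(2*p+2*q+7) := Nat.mul_le_mul h1 (by omega)
        _ = (p+q+1)*((2*p+2*q+7)*(2*p+2*q+6)) := by ring
        _ ≤ (p+q+1)*((k+2*p+2*q+7)*(k+2*p+2*q+6)) := by gcongr <;> omega
    calc (p+q+1) * ((p+1+q+1) * ((2*(p+1)+2*q)! * ((k+5)! * (k+2*q+2)!)))
        = ((p+q+2)*((2*p+2*q+2)*(2*p+2*q+1))) * ((p+q+1) * ((2*p+2*q)! * ((k+5)! * (k+2*q+2)!))) := by
          rw [e1]; ring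
      _ ≤ ((p+q+2)*((2*p+2*q+2)*(2*p+2*q+1))) * ((k+3) * ((2*q)! * ((k+2)! * (k+2*p+2*q+5)!))) :=
          mul_le_mul_right ih _
      _ ≤ ((p+q+1)*((k+2*p+2*q+7)*(k+2*p+2*q+6))) * ((k+3) * ((2*q)! * ((k+2)! * (k+2*p+2*q+5)!))) :=
          mul_le_mul_left hs _
      _ = (p+q+1) * ((k+3) * ((2*q)! * ((k+2)! * (k+2*(p+1)+2*q+5)!))) := by rw [e2]; ring

theorem factorial_binomial_ineq (p q i : ℕ) (hi : 1 ≤ i) :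
    ((3:ℝ)^(i-1) * ((i-1)! : ℝ) * ((3*i+2*q-1)! : ℝ)) /
      (((2*q)! : ℝ) * ((3*i-1)! : ℝ) * ((3*i+2+2*q+2*p)! : ℝ)) ≤
    ((3:ℝ)^i * (i ! : ℝ)) /
      (((p : ℝ) + q + 1) * ((2*p+2*q)! : ℝ) * ((3*i+2)! : ℝ)) := by
  obtain ⟨j, rfl⟩ : ∃ j, i = j+1 := ⟨i-1, by omega⟩
  rw [show j+1-1 = j from rfl,
    show 3*(j+1)+2*q-1 = 3*j+2*q+2 from by omega,
    show 3*(j+1)-1 = 3*j+2 from by omega,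
    show 3*(j+1)+2+2*q+2*p = 3*j+2*p+2*q+5 from by ring,
    show 3*(j+1)+2 = 3*j+5 from by ring]
  rw [div_le_div_iff₀ (by positivity) (by positivity)]
  have key := key_fact_ineq (3*j) p q
  have Hr : (((p:ℝ)+q+1) * (((2*p+2*q)! : ℝ) * (((3*j+5)! : ℝ) * ((3*j+2*q+2)! : ℝ)))) ≤
      ((3*j+3 : ℕ) : ℝ) * (((2*q)! : ℝ) * (((3*j+2)! : ℝ) * ((3*j+2*p+2*q+5)! : ℝ))) := by
    exact_mod_cast key
  have c_nonneg : (0:ℝ) ≤ 3^j * ((j)! : ℝ) := by positivity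
  have H2 := mul_le_mul_of_nonneg_left Hr c_nonneg
  rw [pow_succ, Nat.factorial_succ j]
  push_cast at H2 ⊢
  nlinarith [H2]
end

section
/- Define, for fixed λ > a ≥ 0, functions g_i : [-1,0] → ℝ by: g_0 solves g_0''' - (λ-a)g_0' = 0 with g_0(0)=g_0'(0)=0, g_0''(0)=1; and for i ≥ 1, g_i solves g_i''' - (λ-a)g_i' = -g_{i-1} with g_i(0)=g_i'(0)=g_i''(0)=0. Then for every i ≥ 0 and x ∈ [-1,0], |g_i(x)| ≤ cosh(√(λ-a) x) · (-x)^{3i+2} · 3^i · i! / (3i+2)!. -/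
open Nat Real Set

private lemma hd_expmul (c x : ℝ) :
    HasDerivAt (fun t : ℝ => Real.exp (c * t)) (c * Real.exp (c * x)) x := by
  simpa [mul_comm] using ((hasDerivAt_id x).const_mul c).exp

private lemma hd_expneg (c x : ℝ) :
    HasDerivAt (fun t : ℝ => Real.exp (-(c * t))) (-c * Real.exp (-(c * x))) x := by
  simpa [neg_mul] using hd_expmul (-c) x

private lemma ftc_pow (n : ℕ) (x : ℝ) :
    ∫ t in x..(0:ℝ), (-t) ^ n = (-x) ^ (n + 1) / ((n : ℝ) + 1) := by
  have h : ∀ t ∈ Set.uIcc x (0:ℝ),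
      HasDerivAt (fun s : ℝ => -(-s) ^ (n + 1) / ((n : ℝ) + 1)) ((-t) ^ n) t := by
    intro t _
    have h1 : HasDerivAt (fun s : ℝ => -s) (-1) t := (hasDerivAt_id t).neg
    have h2 := (h1.pow (n + 1)).neg.div_const ((n : ℝ) + 1)
    refine h2.congr_deriv ?_
    have hne : ((n : ℝ) + 1) ≠ 0 := by positivity
    field_simp
    simp
  rw [intervalIntegral.integral_eq_sub_of_hasDerivAt h
    ((continuous_neg.pow n).intervalIntegrable x 0)]
  simp
  ring

private lemma int_abs_bound {x : ℝ} (hx : x ≤ 0) {f B : ℝ → ℝ}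
    (hf : Continuous f) (hB : Continuous B) (h : ∀ t ∈ Set.Icc x 0, |f t| ≤ B t) :
    |∫ t in x..0, f t| ≤ ∫ t in x..0, B t :=
  (intervalIntegral.abs_integral_le_integral_abs hx).trans
    (intervalIntegral.integral_mono_on hx (hf.abs.intervalIntegrable _ _)
      (hB.intervalIntegrable _ _) h)

private lemma sinh_le_mul_cosh {y : ℝ} (hy : 0 ≤ y) : Real.sinh y ≤ y * Real.cosh y := by
  have h : ∀ z ∈ Set.uIcc (0:ℝ) y,
      HasDerivAt (fun t => t * Real.cosh t - Real.sinh t) (z * Real.sinh z) z := by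
    intro z _
    have := ((hasDerivAt_id z).mul (Real.hasDerivAt_cosh z)).sub (Real.hasDerivAt_sinh z)
    refine this.congr_deriv ?_
    simp only [id]
    ring
  have hint : ∫ z in (0:ℝ)..y, z * Real.sinh z
      = (y * Real.cosh y - Real.sinh y) - (0 * Real.cosh 0 - Real.sinh 0) :=
    intervalIntegral.integral_eq_sub_of_hasDerivAt h
      ((continuous_id.mul Real.continuous_sinh).intervalIntegrable 0 y)
  have hnn : 0 ≤ ∫ z in (0:ℝ)..y, z * Real.sinh z := by
    apply intervalIntegral.integral_nonneg hy
    intro u hu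
    exact mul_nonneg hu.1 (Real.sinh_nonneg_iff.mpr hu.1)
  simp at hint
  linarith

private lemma cosh_sub_one_le (s : ℝ) : Real.cosh s - 1 ≤ s ^ 2 / 2 * Real.cosh s := by
  suffices H : ∀ s : ℝ, 0 ≤ s → Real.cosh s - 1 ≤ s ^ 2 / 2 * Real.cosh s by
    rcases le_total 0 s with hs | hs
    · exact H s hs
    · have := H (-s) (by linarith)
      simpa using this
  intro s hs
  have h2 : Real.cosh s = 2 * Real.sinh (s/2) ^ 2 + 1 := by
    have ha := Real.cosh_two_mul (s/2)
    have hb := Real.cosh_sq (s/2)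
    rw [show 2 * (s/2) = s by ring] at ha
    linarith
  have h3 : Real.cosh s = 2 * Real.cosh (s/2) ^ 2 - 1 := by
    have ha := Real.cosh_two_mul (s/2)
    have hb := Real.cosh_sq (s/2)
    rw [show 2 * (s/2) = s by ring] at ha
    linarith
  have hsinh : Real.sinh (s/2) ≤ (s/2) * Real.cosh (s/2) := sinh_le_mul_cosh (by linarith)
  have hsnn : 0 ≤ Real.sinh (s/2) := Real.sinh_nonneg_iff.mpr (by linarith)
  have hsq : Real.sinh (s/2) ^ 2 ≤ ((s/2) * Real.cosh (s/2)) ^ 2 :=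
    pow_le_pow_left₀ hsnn hsinh 2
  have hone := Real.one_le_cosh s
  nlinarith [Real.cosh_pos (s/2), sq_nonneg s]

private lemma kernel_bound {c x s : ℝ} (hc : 0 ≤ c) (hs : s ≤ 0) :
    Real.exp (-(c*x)) * Real.exp (c*s) * Real.cosh (c*s) ≤ 2 * Real.cosh (c*x) := by
  rw [Real.cosh_eq, Real.cosh_eq]
  have e1 : Real.exp (-(c*x)) * Real.exp (c*s) * Real.exp (c*s)
      = Real.exp (-(c*x) + c*s + c*s) := by
    rw [← Real.exp_add, ← Real.exp_add]
  have e2 : Real.exp (-(c*x)) * Real.exp (c*s) * Real.exp (-(c*s))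
      = Real.exp (-(c*x)) := by
    rw [← Real.exp_add, ← Real.exp_add]; ring_nf
  have e3 : Real.exp (-(c*x) + c*s + c*s) ≤ Real.exp (-(c*x)) :=
    Real.exp_le_exp.mpr (by nlinarith)
  have e4 : (0:ℝ) < Real.exp (c*x) := Real.exp_pos _
  nlinarith [e1, e2, e3, e4]

private lemma repr_lemma (c : ℝ) (u f : ℝ → ℝ) (hu : ContDiff ℝ (⊤ : ℕ∞) u) (hf : Continuous f)
    (hode : ∀ x ∈ Set.Icc (-1:ℝ) 0, iteratedDeriv 3 u x - c^2 * deriv u x = f x)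
    (h0 : u 0 = 0) (h1 : deriv u 0 = 0) (K : ℝ) (h2 : iteratedDeriv 2 u 0 = K) :
    ∀ x ∈ Set.Icc (-1:ℝ) 0,
      (iteratedDeriv 2 u x - c^2 * u x = K - ∫ t in x..0, f t) ∧
      (deriv u x + c * u x =
        -(Real.exp (c*x) * ∫ t in x..0,
            Real.exp (-(c*t)) * (iteratedDeriv 2 u t - c^2 * u t))) ∧
      (u x = -(Real.exp (-(c*x)) * ∫ t in x..0,
            Real.exp (c*t) * (deriv u t + c * u t))) := by
  have hu' : ContDiff ℝ (↑(⊤:ℕ∞)) u := hu.of_le (by simp)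
  have hu1 : Differentiable ℝ u := hu'.differentiable (by simp)
  have hdu : ContDiff ℝ (↑(⊤:ℕ∞)) (deriv u) := (contDiff_infty_iff_deriv.mp hu').2
  have hddu : ContDiff ℝ (↑(⊤:ℕ∞)) (deriv (deriv u)) := (contDiff_infty_iff_deriv.mp hdu).2
  have e2 : iteratedDeriv 2 u = deriv (deriv u) := by
    rw [iteratedDeriv_succ, iteratedDeriv_one]
  have e3 : iteratedDeriv 3 u = deriv (deriv (deriv u)) := by
    rw [iteratedDeriv_succ, e2]
  simp only [e2, e3] at hode h2 ⊢
  have hDu : ∀ t, HasDerivAt u (deriv u t) t := fun t => (hu1 t).hasDerivAt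
  have hDdu : ∀ t, HasDerivAt (deriv u) (deriv (deriv u) t) t :=
    fun t => ((hdu.differentiable (by simp)) t).hasDerivAt
  have hDddu : ∀ t, HasDerivAt (deriv (deriv u)) (deriv (deriv (deriv u)) t) t :=
    fun t => ((hddu.differentiable (by simp)) t).hasDerivAt
  have hcu : Continuous u := hu.continuous
  have hcdu : Continuous (deriv u) := hdu.continuous
  have hcddu : Continuous (deriv (deriv u)) := hddu.continuous
  intro x hx
  obtain ⟨hx1, hx0⟩ := hx
  have hsub : Set.uIcc x (0:ℝ) ⊆ Set.Icc (-1:ℝ) 0 := by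
    rw [Set.uIcc_of_le hx0]
    exact Set.Icc_subset_Icc hx1 le_rfl
  have part1 : deriv (deriv u) x - c^2 * u x = K - ∫ t in x..0, f t := by
    have hw : ∀ t ∈ Set.uIcc x (0:ℝ),
        HasDerivAt (fun s => deriv (deriv u) s - c^2 * u s) (f t) t := by
      intro t ht
      have := (hDddu t).sub ((hDu t).const_mul (c^2))
      rw [hode t (hsub ht)] at this
      exact this
    have := intervalIntegral.integral_eq_sub_of_hasDerivAt hw (hf.intervalIntegrable x 0)
    rw [this, h2, h0]
    ring
  refine ⟨part1, ?_, ?_⟩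
  · have hq : ∀ t, HasDerivAt (fun s => Real.exp (-(c*s)) * (deriv u s + c * u s))
        (Real.exp (-(c*t)) * (deriv (deriv u) t - c^2 * u t)) t := by
      intro t
      have hexp : HasDerivAt (fun s : ℝ => Real.exp (-(c*s))) (-c * Real.exp (-(c*t))) t :=
        hd_expneg c t
      have hp : HasDerivAt (fun s => deriv u s + c * u s)
          (deriv (deriv u) t + c * deriv u t) t := (hDdu t).add ((hDu t).const_mul c)
      have := hexp.mul hp
      refine this.congr_deriv ?_
      ring
    have hwc : Continuous (fun t => Real.exp (-(c*t)) * (deriv (deriv u) t - c^2 * u t)) := by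
      fun_prop
    have := intervalIntegral.integral_eq_sub_of_hasDerivAt
      (f := fun s => Real.exp (-(c*s)) * (deriv u s + c * u s))
      (fun t _ => hq t) (hwc.intervalIntegrable x 0)
    simp only [h0, h1] at this
    have hmul : Real.exp (c*x) * Real.exp (-(c*x)) = 1 := by
      rw [← Real.exp_add]; simp
    linear_combination Real.exp (c*x) * this - (deriv u x + c * u x) * hmul
  · have hr : ∀ t, HasDerivAt (fun s => Real.exp (c*s) * u s)
        (Real.exp (c*t) * (deriv u t + c * u t)) t := by
      intro t
      have hexp : HasDerivAt (fun s : ℝ => Real.exp (c*s)) (c * Real.exp (c*t)) t :=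
        hd_expmul c t
      have := hexp.mul (hDu t)
      refine this.congr_deriv ?_
      ring
    have hpc : Continuous (fun t => Real.exp (c*t) * (deriv u t + c * u t)) := by fun_prop
    have := intervalIntegral.integral_eq_sub_of_hasDerivAt
      (f := fun s => Real.exp (c*s) * u s)
      (fun t _ => hr t) (hpc.intervalIntegrable x 0)
    simp only [h0] at this
    have hmul : Real.exp (-(c*x)) * Real.exp (c*x) = 1 := by
      rw [← Real.exp_add]; simp
    linear_combination Real.exp (-(c*x)) * this - u x * hmul

set_option maxHeartbeats 2000000 in
theorem generating_functions_bound
    (a lam : ℝ) (ha : 0 ≤ a) (hlam : a < lam)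
    (g : ℕ → ℝ → ℝ) (hg : ∀ i, ContDiff ℝ (⊤ : ℕ∞) (g i))
    (h0ode : ∀ x ∈ Set.Icc (-1:ℝ) 0,
      iteratedDeriv 3 (g 0) x - (lam - a) * deriv (g 0) x = 0)
    (h00 : g 0 0 = 0) (h01 : deriv (g 0) 0 = 0) (h02 : iteratedDeriv 2 (g 0) 0 = 1)
    (hiode : ∀ i : ℕ, ∀ x ∈ Set.Icc (-1:ℝ) 0,
      iteratedDeriv 3 (g (i+1)) x - (lam - a) * deriv (g (i+1)) x = - g i x)
    (hi0 : ∀ i : ℕ, g (i+1) 0 = 0) (hi1 : ∀ i : ℕ, deriv (g (i+1)) 0 = 0)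
    (hi2 : ∀ i : ℕ, iteratedDeriv 2 (g (i+1)) 0 = 0) :
    ∀ i : ℕ, ∀ x ∈ Set.Icc (-1:ℝ) 0,
      |g i x| ≤ Real.cosh (Real.sqrt (lam - a) * x) * (-x)^(3*i+2) * 3^i * (i ! : ℝ)
                  / ((3*i+2)! : ℝ) := by
  have hμ : 0 < lam - a := sub_pos.mpr hlam
  obtain ⟨c, hcdef⟩ : ∃ c : ℝ, c = Real.sqrt (lam - a) := ⟨_, rfl⟩
  rw [← hcdef]
  have hc : 0 < c := hcdef ▸ Real.sqrt_pos.mpr hμ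
  have hc2 : c^2 = lam - a := hcdef ▸ Real.sq_sqrt hμ.le
  intro i
  induction i with
  | zero =>
    intro x hx
    obtain ⟨hx1, hx0⟩ := hx
    have hode0 : ∀ y ∈ Set.Icc (-1:ℝ) 0,
        iteratedDeriv 3 (g 0) y - c^2 * deriv (g 0) y = (fun _ : ℝ => (0:ℝ)) y := by
      intro y hy; rw [hc2]; exact h0ode y hy
    have parts := repr_lemma c (g 0) (fun _ => 0) (hg 0) continuous_const hode0 h00 h01 1 h02
    have hw1 : ∀ t ∈ Set.Icc (-1:ℝ) 0, iteratedDeriv 2 (g 0) t - c^2 * g 0 t = 1 := by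
      intro t ht
      have := (parts t ht).1
      simpa using this
    have hp : ∀ t ∈ Set.Icc (-1:ℝ) 0,
        deriv (g 0) t + c * g 0 t = (Real.exp (c*t) - 1)/c := by
      intro t ht
      obtain ⟨ht1, ht0⟩ := ht
      have h2' := (parts t ⟨ht1, ht0⟩).2.1
      have hsub : Set.uIcc t (0:ℝ) ⊆ Set.Icc (-1:ℝ) 0 := by
        rw [Set.uIcc_of_le ht0]; exact Set.Icc_subset_Icc ht1 le_rfl
      have hcongr : (∫ s in t..0,
            Real.exp (-(c*s)) * (iteratedDeriv 2 (g 0) s - c^2 * g 0 s))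
          = ∫ s in t..0, Real.exp (-(c*s)) := by
        apply intervalIntegral.integral_congr
        intro s hs
        simp only [hw1 s (hsub hs), mul_one]
      have hftc : ∫ s in t..0, Real.exp (-(c*s)) = (Real.exp (-(c*t)) - 1)/c := by
        have hD : ∀ s ∈ Set.uIcc t (0:ℝ),
            HasDerivAt (fun y : ℝ => -(Real.exp (-(c*y))/c)) (Real.exp (-(c*s))) s := by
          intro s _
          have h' := ((hd_expneg c s).div_const c).neg
          refine h'.congr_deriv ?_
          field_simp
        rw [intervalIntegral.integral_eq_sub_of_hasDerivAt hD
          ((by fun_prop : Continuous fun s : ℝ => Real.exp (-(c*s))).intervalIntegrable t 0)]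
        simp
        field_simp
        ring
      rw [h2', hcongr, hftc]
      have hmul : Real.exp (c*t) * Real.exp (-(c*t)) = 1 := by
        rw [← Real.exp_add]; simp
      linear_combination (-(1:ℝ)/c) * hmul
    have hu : g 0 x = (Real.cosh (c*x) - 1)/c^2 := by
      have h3 := (parts x ⟨hx1, hx0⟩).2.2
      have hsub : Set.uIcc x (0:ℝ) ⊆ Set.Icc (-1:ℝ) 0 := by
        rw [Set.uIcc_of_le hx0]; exact Set.Icc_subset_Icc hx1 le_rfl
      have hcongr : (∫ s in x..0, Real.exp (c*s) * (deriv (g 0) s + c * g 0 s))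
          = ∫ s in x..0, (Real.exp (2*c*s) - Real.exp (c*s))/c := by
        apply intervalIntegral.integral_congr
        intro s hs
        simp only [hp s (hsub hs), show (2:ℝ)*c*s = c*s + c*s by ring, Real.exp_add]
        field_simp
      have hftc := intervalIntegral.integral_eq_sub_of_hasDerivAt (a := x) (b := (0:ℝ))
          (f := fun s : ℝ => Real.exp (2*c*s)/(2*c^2) - Real.exp (c*s)/c^2)
          (f' := fun s : ℝ => (Real.exp (2*c*s) - Real.exp (c*s))/c)
          (by
            intro s _
            have hA := hd_expmul (2*c) s
            have hB := hd_expmul c s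
            have := (hA.div_const (2*c^2)).sub (hB.div_const (c^2))
            refine this.congr_deriv ?_
            field_simp)
          ((by fun_prop :
            Continuous fun s : ℝ => (Real.exp (2*c*s) - Real.exp (c*s))/c).intervalIntegrable x 0)
      rw [h3, hcongr, hftc, Real.cosh_eq]
      beta_reduce
      have hex : Real.exp (2*c*x) = Real.exp (c*x) * Real.exp (c*x) := by
        rw [← Real.exp_add]; ring_nf
      rw [Real.exp_neg, hex]
      simp only [mul_zero, Real.exp_zero]
      have hEne : Real.exp (c*x) ≠ 0 := (Real.exp_pos _).ne'
      field_simp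
      ring
    rw [hu]
    have hnn : 0 ≤ (Real.cosh (c*x) - 1)/c^2 :=
      div_nonneg (by linarith [Real.one_le_cosh (c*x)]) (by positivity)
    rw [abs_of_nonneg hnn]
    norm_num [Nat.factorial]
    rw [div_le_iff₀ (by positivity : (0:ℝ) < c^2)]
    nlinarith [cosh_sub_one_le (c*x), Real.cosh_pos (c*x), sq_nonneg x, sq_nonneg c]
  | succ i ih =>
    intro x hx
    obtain ⟨hx1, hx0⟩ := hx
    have hodei : ∀ y ∈ Set.Icc (-1:ℝ) 0,
        iteratedDeriv 3 (g (i+1)) y - c^2 * deriv (g (i+1)) y = (fun t => -(g i t)) y := by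
      intro y hy; rw [hc2]; exact hiode i y hy
    have hfc : Continuous (fun t => -(g i t)) := ((hg i).continuous).neg
    have parts := repr_lemma c (g (i+1)) _ (hg (i+1)) hfc hodei (hi0 i) (hi1 i) 0 (hi2 i)
    obtain ⟨C, hC⟩ : ∃ C : ℝ, C = 3^i * (i ! : ℝ) / ((3*i+2)! : ℝ) := ⟨_, rfl⟩
    have hCpos : 0 < C := by rw [hC]; positivity
    have hdg : ContDiff ℝ (↑(⊤:ℕ∞)) (deriv (g (i+1))) :=
      (contDiff_infty_iff_deriv.mp ((hg (i+1)).of_le (by simp))).2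
    have hddg : ContDiff ℝ (↑(⊤:ℕ∞)) (deriv (deriv (g (i+1)))) :=
      (contDiff_infty_iff_deriv.mp hdg).2
    have e2g : iteratedDeriv 2 (g (i+1)) = deriv (deriv (g (i+1))) := by
      rw [iteratedDeriv_succ, iteratedDeriv_one]
    have hw_cont : Continuous (fun t => iteratedDeriv 2 (g (i+1)) t - c^2 * g (i+1) t) := by
      rw [e2g]
      exact hddg.continuous.sub (continuous_const.mul (hg (i+1)).continuous)
    have hp_cont : Continuous (fun t => deriv (g (i+1)) t + c * g (i+1) t) :=
      hdg.continuous.add (continuous_const.mul (hg (i+1)).continuous)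
    -- Step W : bound on w
    have hW : ∀ t ∈ Set.Icc (-1:ℝ) 0,
        |iteratedDeriv 2 (g (i+1)) t - c^2 * g (i+1) t|
          ≤ Real.cosh (c*t) * (-t)^(3*i+3) * C / (3*(i:ℝ)+3) := by
      intro t ht
      obtain ⟨ht1, ht0⟩ := ht
      have hpart := (parts t ⟨ht1, ht0⟩).1
      rw [hpart, zero_sub, abs_neg]
      have hsub : Set.Icc t (0:ℝ) ⊆ Set.Icc (-1:ℝ) 0 := Set.Icc_subset_Icc ht1 le_rfl
      have hptw : ∀ s ∈ Set.Icc t (0:ℝ),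
          |-(g i s)| ≤ Real.cosh (c*t) * C * (-s)^(3*i+2) := by
        intro s hs
        rw [abs_neg]
        refine (ih s (hsub hs)).trans ?_
        have hcc : Real.cosh (c*s) ≤ Real.cosh (c*t) := by
          rw [Real.cosh_le_cosh, abs_mul, abs_mul]
          have h1 : |s| ≤ |t| := by
            rw [abs_of_nonpos hs.2, abs_of_nonpos ht0]
            linarith [hs.1]
          exact mul_le_mul_of_nonneg_left h1 (abs_nonneg c)
        have hXnn : 0 ≤ (-s)^(3*i+2) * C :=
          mul_nonneg (pow_nonneg (by linarith [hs.2]) _) hCpos.le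
        calc Real.cosh (c*s) * (-s)^(3*i+2) * 3^i * (i ! : ℝ) / ((3*i+2)! : ℝ)
            = Real.cosh (c*s) * ((-s)^(3*i+2) * C) := by rw [hC]; ring
          _ ≤ Real.cosh (c*t) * ((-s)^(3*i+2) * C) := mul_le_mul_of_nonneg_right hcc hXnn
          _ = Real.cosh (c*t) * C * (-s)^(3*i+2) := by ring
      have hb := int_abs_bound ht0 hfc
        (by fun_prop : Continuous (fun s : ℝ => Real.cosh (c*t) * C * (-s)^(3*i+2))) hptw
      refine hb.trans ?_
      rw [intervalIntegral.integral_const_mul, ftc_pow]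
      apply le_of_eq
      push_cast
      ring
    -- Step P : bound on p
    have hP : ∀ t ∈ Set.Icc (-1:ℝ) 0,
        |deriv (g (i+1)) t + c * g (i+1) t|
          ≤ Real.cosh (c*t) * (-t)^(3*i+4) * C / (3*(i:ℝ)+3) / (3*(i:ℝ)+4) := by
      intro t ht
      obtain ⟨ht1, ht0⟩ := ht
      rw [(parts t ⟨ht1, ht0⟩).2.1, abs_neg, abs_mul, abs_of_pos (Real.exp_pos _)]
      have hsub : Set.Icc t (0:ℝ) ⊆ Set.Icc (-1:ℝ) 0 := Set.Icc_subset_Icc ht1 le_rfl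
      have hIb : |∫ s in t..0,
            Real.exp (-(c*s)) * (iteratedDeriv 2 (g (i+1)) s - c^2 * g (i+1) s)|
          ≤ ∫ s in t..0,
            Real.exp (-(c*s)) * (Real.cosh (c*s) * (-s)^(3*i+3) * C / (3*(i:ℝ)+3)) := by
        apply int_abs_bound ht0 (by fun_prop) (by fun_prop)
        intro s hs
        rw [abs_mul, abs_of_pos (Real.exp_pos _)]
        exact mul_le_mul_of_nonneg_left (hW s (hsub hs)) (Real.exp_pos _).le
      calc Real.exp (c*t) * |∫ s in t..0,
              Real.exp (-(c*s)) * (iteratedDeriv 2 (g (i+1)) s - c^2 * g (i+1) s)|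
          ≤ Real.exp (c*t) * ∫ s in t..0,
              Real.exp (-(c*s)) * (Real.cosh (c*s) * (-s)^(3*i+3) * C / (3*(i:ℝ)+3)) :=
            mul_le_mul_of_nonneg_left hIb (Real.exp_pos _).le
        _ = ∫ s in t..0, Real.exp (c*t) *
              (Real.exp (-(c*s)) * (Real.cosh (c*s) * (-s)^(3*i+3) * C / (3*(i:ℝ)+3))) :=
            (intervalIntegral.integral_const_mul _ _).symm
        _ ≤ ∫ s in t..0, Real.cosh (c*t) * (C / (3*(i:ℝ)+3)) * (-s)^(3*i+3) := by
            apply intervalIntegral.integral_mono_on ht0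
              ((by fun_prop : Continuous fun s : ℝ => Real.exp (c*t) *
                (Real.exp (-(c*s)) * (Real.cosh (c*s) * (-s)^(3*i+3) * C / (3*(i:ℝ)+3)))
                ).intervalIntegrable _ _)
              ((by fun_prop : Continuous fun s : ℝ =>
                Real.cosh (c*t) * (C / (3*(i:ℝ)+3)) * (-s)^(3*i+3)).intervalIntegrable _ _)
            intro s hs
            have h1 : Real.exp (c*t) * Real.exp (-(c*s)) ≤ 1 := by
              rw [← Real.exp_add, Real.exp_le_one_iff]
              nlinarith [hs.1, hc.le]
            have h2 : Real.cosh (c*s) ≤ Real.cosh (c*t) := by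
              rw [Real.cosh_le_cosh, abs_mul, abs_mul]
              have h1' : |s| ≤ |t| := by
                rw [abs_of_nonpos hs.2, abs_of_nonpos ht0]
                linarith [hs.1]
              exact mul_le_mul_of_nonneg_left h1' (abs_nonneg c)
            have hXnn : 0 ≤ (-s)^(3*i+3) * C / (3*(i:ℝ)+3) :=
              div_nonneg (mul_nonneg (pow_nonneg (by linarith [hs.2]) _) hCpos.le)
                (by positivity)
            have hin : Real.exp (c*t) * Real.exp (-(c*s)) * Real.cosh (c*s)
                ≤ Real.cosh (c*t) := by
              calc Real.exp (c*t) * Real.exp (-(c*s)) * Real.cosh (c*s)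
                  ≤ 1 * Real.cosh (c*s) :=
                    mul_le_mul_of_nonneg_right h1 (Real.cosh_pos _).le
                _ = Real.cosh (c*s) := one_mul _
                _ ≤ Real.cosh (c*t) := h2
            calc Real.exp (c*t) *
                  (Real.exp (-(c*s)) * (Real.cosh (c*s) * (-s)^(3*i+3) * C / (3*(i:ℝ)+3)))
                = (Real.exp (c*t) * Real.exp (-(c*s)) * Real.cosh (c*s)) *
                  ((-s)^(3*i+3) * C / (3*(i:ℝ)+3)) := by ring
              _ ≤ Real.cosh (c*t) * ((-s)^(3*i+3) * C / (3*(i:ℝ)+3)) :=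
                  mul_le_mul_of_nonneg_right hin hXnn
              _ = Real.cosh (c*t) * (C / (3*(i:ℝ)+3)) * (-s)^(3*i+3) := by ring
        _ = Real.cosh (c*t) * (-t)^(3*i+4) * C / (3*(i:ℝ)+3) / (3*(i:ℝ)+4) := by
            rw [intervalIntegral.integral_const_mul, ftc_pow]
            push_cast
            ring
    -- Step U : final bound
    rw [(parts x ⟨hx1, hx0⟩).2.2, abs_neg, abs_mul, abs_of_pos (Real.exp_pos _)]
    have hsub : Set.Icc x (0:ℝ) ⊆ Set.Icc (-1:ℝ) 0 := Set.Icc_subset_Icc hx1 le_rfl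
    have hIb : |∫ s in x..0, Real.exp (c*s) * (deriv (g (i+1)) s + c * g (i+1) s)|
        ≤ ∫ s in x..0, Real.exp (c*s) *
            (Real.cosh (c*s) * (-s)^(3*i+4) * C / (3*(i:ℝ)+3) / (3*(i:ℝ)+4)) := by
      apply int_abs_bound hx0 (by fun_prop) (by fun_prop)
      intro s hs
      rw [abs_mul, abs_of_pos (Real.exp_pos _)]
      exact mul_le_mul_of_nonneg_left (hP s (hsub hs)) (Real.exp_pos _).le
    have hxnn : (0:ℝ) ≤ -x := by linarith
    calc Real.exp (-(c*x)) * |∫ s in x..0,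
            Real.exp (c*s) * (deriv (g (i+1)) s + c * g (i+1) s)|
        ≤ Real.exp (-(c*x)) * ∫ s in x..0, Real.exp (c*s) *
            (Real.cosh (c*s) * (-s)^(3*i+4) * C / (3*(i:ℝ)+3) / (3*(i:ℝ)+4)) :=
          mul_le_mul_of_nonneg_left hIb (Real.exp_pos _).le
      _ = ∫ s in x..0, Real.exp (-(c*x)) * (Real.exp (c*s) *
            (Real.cosh (c*s) * (-s)^(3*i+4) * C / (3*(i:ℝ)+3) / (3*(i:ℝ)+4))) :=
          (intervalIntegral.integral_const_mul _ _).symm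
      _ ≤ ∫ s in x..0, 2 * Real.cosh (c*x) * (C / (3*(i:ℝ)+3) / (3*(i:ℝ)+4)) *
            (-s)^(3*i+4) := by
          apply intervalIntegral.integral_mono_on hx0
            ((by fun_prop : Continuous fun s : ℝ => Real.exp (-(c*x)) * (Real.exp (c*s) *
              (Real.cosh (c*s) * (-s)^(3*i+4) * C / (3*(i:ℝ)+3) / (3*(i:ℝ)+4)))
              ).intervalIntegrable _ _)
            ((by fun_prop : Continuous fun s : ℝ =>
              2 * Real.cosh (c*x) * (C / (3*(i:ℝ)+3) / (3*(i:ℝ)+4)) * (-s)^(3*i+4)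
              ).intervalIntegrable _ _)
          intro s hs
          have hker := kernel_bound (c := c) (x := x) (s := s) hc.le hs.2
          have hXnn : 0 ≤ (-s)^(3*i+4) * C / (3*(i:ℝ)+3) / (3*(i:ℝ)+4) :=
            div_nonneg (div_nonneg
              (mul_nonneg (pow_nonneg (by linarith [hs.2]) _) hCpos.le) (by positivity))
              (by positivity)
          calc Real.exp (-(c*x)) * (Real.exp (c*s) *
                (Real.cosh (c*s) * (-s)^(3*i+4) * C / (3*(i:ℝ)+3) / (3*(i:ℝ)+4)))
              = (Real.exp (-(c*x)) * Real.exp (c*s) * Real.cosh (c*s)) *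
                ((-s)^(3*i+4) * C / (3*(i:ℝ)+3) / (3*(i:ℝ)+4)) := by ring
            _ ≤ 2 * Real.cosh (c*x) * ((-s)^(3*i+4) * C / (3*(i:ℝ)+3) / (3*(i:ℝ)+4)) :=
                mul_le_mul_of_nonneg_right hker hXnn
            _ = 2 * Real.cosh (c*x) * (C / (3*(i:ℝ)+3) / (3*(i:ℝ)+4)) * (-s)^(3*i+4) := by
                ring
      _ = 2 * Real.cosh (c*x) * (C / (3*(i:ℝ)+3) / (3*(i:ℝ)+4)) *
            ((-x)^(3*i+5)/(3*(i:ℝ)+5)) := by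
          rw [intervalIntegral.integral_const_mul, ftc_pow]
          push_cast
          try ring
      _ ≤ Real.cosh (c*x) * (-x)^(3*(i+1)+2) * 3^(i+1) * ((i+1)! : ℝ)
            / ((3*(i+1)+2)! : ℝ) := by
          have hfacteq : ((3*(i+1)+2)! : ℕ) = (3*i+5)*((3*i+4)*((3*i+3)*(3*i+2)!)) := by
            rw [show 3*(i+1)+2 = 3*i+2+1+1+1 by ring, Nat.factorial_succ,
              Nat.factorial_succ, Nat.factorial_succ]
          have h5 : (((3*(i+1)+2)! : ℕ) : ℝ)
              = (3*(i:ℝ)+5)*((3*(i:ℝ)+4)*((3*(i:ℝ)+3)*((3*i+2)! : ℕ))) := by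
            rw [hfacteq]; push_cast; ring
          have h6 : (((i+1)! : ℕ) : ℝ) = ((i:ℝ)+1) * ((i !: ℕ) : ℝ) := by
            rw [Nat.factorial_succ]; push_cast; ring
          have hkey : 2 * C / (3*(i:ℝ)+3) / (3*(i:ℝ)+4) / (3*(i:ℝ)+5)
              ≤ (3:ℝ)^(i+1) * (((i+1)! : ℕ) : ℝ) / (((3*(i+1)+2)! : ℕ) : ℝ) := by
            have hfpos : (0:ℝ) < ((3*i+2)! : ℕ) := by positivity
            have hL : 2 * C / (3*(i:ℝ)+3) / (3*(i:ℝ)+4) / (3*(i:ℝ)+5)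
                = 2 * 3^i * ((i !: ℕ) : ℝ) / (((3*(i+1)+2)! : ℕ) : ℝ) := by
              rw [hC, h5]
              have f1 : (((3*i+2)! : ℕ) : ℝ) ≠ 0 := by positivity
              have f2 : (3*(i:ℝ)+3) ≠ 0 := by positivity
              have f3 : (3*(i:ℝ)+4) ≠ 0 := by positivity
              have f4 : (3*(i:ℝ)+5) ≠ 0 := by positivity
              field_simp
            have hR : (3:ℝ)^(i+1) * (((i+1)! : ℕ) : ℝ) / (((3*(i+1)+2)! : ℕ) : ℝ)
                = (3*((i:ℝ)+1)) * 3^i * ((i !: ℕ) : ℝ) / (((3*(i+1)+2)! : ℕ) : ℝ) := by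
              rw [h6, pow_succ]; ring
            rw [hL, hR, div_le_div_iff_of_pos_right (by positivity)]
            have hp1 : (0:ℝ) < 3^i * ((i !: ℕ) : ℝ) := by positivity
            nlinarith [mul_nonneg (Nat.cast_nonneg (α := ℝ) i) hp1.le]
          calc 2 * Real.cosh (c*x) * (C / (3*(i:ℝ)+3) / (3*(i:ℝ)+4)) *
                ((-x)^(3*i+5)/(3*(i:ℝ)+5))
              = (Real.cosh (c*x) * (-x)^(3*i+5)) *
                (2 * C / (3*(i:ℝ)+3) / (3*(i:ℝ)+4) / (3*(i:ℝ)+5)) := by ring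
            _ ≤ (Real.cosh (c*x) * (-x)^(3*i+5)) *
                ((3:ℝ)^(i+1) * (((i+1)! : ℕ) : ℝ) / (((3*(i+1)+2)! : ℕ) : ℝ)) :=
                mul_le_mul_of_nonneg_left hkey
                  (mul_nonneg (Real.cosh_pos _).le (pow_nonneg hxnn _))
            _ = Real.cosh (c*x) * (-x)^(3*(i+1)+2) * 3^(i+1) * ((i+1)! : ℝ)
                / ((3*(i+1)+2)! : ℝ) := by
                rw [show 3*(i+1)+2 = 3*i+5 by ring]
                ring
end

section
/- Let a ≥ 0 and λ₀ > 0. There exists C > 0 such that for all λ ≥ λ₀ and all y ∈ H³(-1,0) with y(-1) = y(0) = y'(0) = 0, one has ∑_{k=0}^{3} λ^k ‖∂_x^{3-k} y‖²_{L²(-1,0)} ≤ C ( ‖y''' + (a - λ) y'‖²_{L²(-1,0)} + λ³ ‖y‖²_{L²(-1,0)} ). -/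
/-!
Write `f = y''' + (a - λ) y'`, `p = y'(-1)` and `q = y''(-1)`. Integrating by parts against the
boundary conditions gives `∫ f y = p² / 2`, `∫ f y' = -p q - ‖y''‖² + (a - λ) ‖y'‖²` and
`‖y'‖² = -∫ y y''`, while `(x u²)' = u² + 2 x u u'` gives `q² = ‖y''‖² + 2 ∫ x y'' y'''`; finally
`‖y'''‖² ≤ 2 ‖f‖² + 2 (a - λ)² ‖y'‖²`. Young's inequality, with weights that are powers of `√λ`
dictated by the scaling `‖y⁽ᵏ⁾‖² ∼ λ^(k-3)`, absorbs every term into `‖f‖² + λ³ ‖y‖²`.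
-/

open Set

theorem continuous_of_forall_hasDerivAt {𝕜 F : Type*} [NontriviallyNormedField 𝕜]
    [NormedAddCommGroup F] [NormedSpace 𝕜 F] {u u' : 𝕜 → F} (hu : ∀ x, HasDerivAt u (u' x) x) :
    Continuous u :=
  continuous_iff_continuousAt.2 fun x => (hu x).continuousAt

section Interval

variable {a b : ℝ}

theorem two_mul_integral_le_of_abs_le {g u v : ℝ → ℝ} (hab : a ≤ b) (hg : Continuous g)
    (hu : Continuous u) (hv : Continuous v) (hguv : ∀ x ∈ Icc a b, |g x| ≤ |u x * v x|) (s : ℝ) :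
    2 * s * (∫ x in a..b, g x) ≤ s ^ 2 * (∫ x in a..b, u x ^ 2) + ∫ x in a..b, v x ^ 2 := by
  have young : ∀ x ∈ Icc a b, 2 * s * g x ≤ s ^ 2 * u x ^ 2 + v x ^ 2 := fun x hx => by
    have hsg : s * g x ≤ |s| * (|u x| * |v x|) :=
      calc s * g x ≤ |s| * |g x| := (le_abs_self _).trans (abs_mul _ _).le
        _ ≤ |s| * (|u x| * |v x|) := by
          rw [← abs_mul (u x)]; exact mul_le_mul_of_nonneg_left (hguv x hx) (abs_nonneg s)
    calc 2 * s * g x ≤ 2 * (|s| * |u x|) * |v x| := by linarith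
      _ ≤ (|s| * |u x|) ^ 2 + |v x| ^ 2 := two_mul_le_add_sq _ _
      _ = s ^ 2 * u x ^ 2 + v x ^ 2 := by rw [mul_pow, sq_abs, sq_abs, sq_abs]
  calc 2 * s * (∫ x in a..b, g x) = ∫ x in a..b, 2 * s * g x :=
        (intervalIntegral.integral_const_mul _ _).symm
    _ ≤ ∫ x in a..b, (s ^ 2 * u x ^ 2 + v x ^ 2) :=
      intervalIntegral.integral_mono_on hab (by apply Continuous.intervalIntegrable; fun_prop)
        (by apply Continuous.intervalIntegrable; fun_prop) young
    _ = s ^ 2 * (∫ x in a..b, u x ^ 2) + ∫ x in a..b, v x ^ 2 := by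
      rw [intervalIntegral.integral_add (by apply Continuous.intervalIntegrable; fun_prop)
        (by apply Continuous.intervalIntegrable; fun_prop), intervalIntegral.integral_const_mul]

theorem integral_sq_le_two_mul_integral_sq_add {u v : ℝ → ℝ} (hab : a ≤ b) (hu : Continuous u)
    (hv : Continuous v) (c : ℝ) :
    ∫ x in a..b, u x ^ 2 ≤
      2 * (∫ x in a..b, (u x + c * v x) ^ 2) + 2 * c ^ 2 * ∫ x in a..b, v x ^ 2 := by
  calc ∫ x in a..b, u x ^ 2 ≤ ∫ x in a..b, (2 * (u x + c * v x) ^ 2 + 2 * c ^ 2 * v x ^ 2) :=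
        intervalIntegral.integral_mono_on hab (by apply Continuous.intervalIntegrable; fun_prop)
          (by apply Continuous.intervalIntegrable; fun_prop)
          fun x _ => by nlinarith [sq_nonneg (u x + 2 * c * v x)]
    _ = _ := by
      rw [intervalIntegral.integral_add (by apply Continuous.intervalIntegrable; fun_prop)
        (by apply Continuous.intervalIntegrable; fun_prop), intervalIntegral.integral_const_mul,
        intervalIntegral.integral_const_mul]

theorem sub_mul_sq_eq_integral_sq_add {u u' : ℝ → ℝ} (hu : ∀ x, HasDerivAt u (u' x) x)
    (hu' : Continuous u') :
    (b - a) * u a ^ 2 = (∫ x in a..b, u x ^ 2) + 2 * ∫ x in a..b, (x - b) * u x * u' x := by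
  have hcu : Continuous u := continuous_of_forall_hasDerivAt hu
  have hF : ∀ x, HasDerivAt (fun x => (x - b) * u x ^ 2)
      (u x ^ 2 + 2 * ((x - b) * u x * u' x)) x := fun x =>
    (((hasDerivAt_id' x).sub_const b).fun_mul ((hu x).fun_pow 2)).congr_deriv (by push_cast; ring)
  rw [← intervalIntegral.integral_const_mul, ← intervalIntegral.integral_add
    (by apply Continuous.intervalIntegrable; fun_prop)
    (by apply Continuous.intervalIntegrable; fun_prop),
    intervalIntegral.integral_eq_sub_of_hasDerivAt (fun x _ => hF x)
      (by apply Continuous.intervalIntegrable; fun_prop)]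
  ring

end Interval

theorem mul_sq_neg_one_sub_integral_sq_le {u u' : ℝ → ℝ} (hu : ∀ x, HasDerivAt u (u' x) x)
    (hu' : Continuous u') (s : ℝ) :
    s * (u (-1) ^ 2 - ∫ x in (-1)..0, u x ^ 2) ≤
      s ^ 2 * (∫ x in (-1)..0, u x ^ 2) + ∫ x in (-1)..0, u' x ^ 2 := by
  have hcu : Continuous u := continuous_of_forall_hasDerivAt hu
  have htrace := sub_mul_sq_eq_integral_sq_add (a := -1) (b := 0) hu hu'
  have hyoung := two_mul_integral_le_of_abs_le (a := -1) (b := 0) (g := fun x => x * u x * u' x)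
    (by norm_num) (by fun_prop) hcu hu' (fun x hx => by
      rw [mul_assoc, abs_mul]
      exact mul_le_of_le_one_left (abs_nonneg _) (abs_le.2 ⟨hx.1, hx.2.trans zero_le_one⟩))
    s
  simp only [sub_zero, sub_neg_eq_add, zero_add, one_mul] at htrace
  rw [htrace]
  linarith

theorem sq_deriv_neg_one_eq_two_mul_integral {y y₁ y₂ y₃ : ℝ → ℝ}
    (hy : ∀ x, HasDerivAt y (y₁ x) x) (hy₁ : ∀ x, HasDerivAt y₁ (y₂ x) x)
    (hy₂ : ∀ x, HasDerivAt y₂ (y₃ x) x) (hy₃ : Continuous y₃)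
    (hl : y (-1) = 0) (hr : y 0 = 0) (hr₁ : y₁ 0 = 0) (c : ℝ) :
    y₁ (-1) ^ 2 = 2 * ∫ x in (-1)..0, y x * (y₃ x + c * y₁ x) := by
  have hcy : Continuous y := continuous_of_forall_hasDerivAt hy
  have hcy₁ : Continuous y₁ := continuous_of_forall_hasDerivAt hy₁
  have hF : ∀ x, HasDerivAt (fun x => y x * y₂ x - y₁ x ^ 2 / 2 + c * (y x ^ 2 / 2))
      (y x * (y₃ x + c * y₁ x)) x := fun x =>
    ((((hy x).mul (hy₂ x)).sub (((hy₁ x).pow 2).div_const 2)).add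
      ((((hy x).pow 2).div_const 2).const_mul c)).congr_deriv (by push_cast; ring)
  rw [intervalIntegral.integral_eq_sub_of_hasDerivAt (fun x _ => hF x)
    (by apply Continuous.intervalIntegrable; fun_prop), hl, hr, hr₁]
  ring

theorem mul_sq_deriv_neg_one_le {y y₁ y₂ y₃ : ℝ → ℝ}
    (hy : ∀ x, HasDerivAt y (y₁ x) x) (hy₁ : ∀ x, HasDerivAt y₁ (y₂ x) x)
    (hy₂ : ∀ x, HasDerivAt y₂ (y₃ x) x) (hy₃ : Continuous y₃)
    (hl : y (-1) = 0) (hr : y 0 = 0) (hr₁ : y₁ 0 = 0) (c s : ℝ) :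
    s * y₁ (-1) ^ 2 ≤
      s ^ 2 * (∫ x in (-1)..0, y x ^ 2) + ∫ x in (-1)..0, (y₃ x + c * y₁ x) ^ 2 := by
  have hcy : Continuous y := continuous_of_forall_hasDerivAt hy
  have hcy₁ : Continuous y₁ := continuous_of_forall_hasDerivAt hy₁
  rw [sq_deriv_neg_one_eq_two_mul_integral hy hy₁ hy₂ hy₃ hl hr hr₁ c, ← mul_assoc, mul_comm s 2]
  exact two_mul_integral_le_of_abs_le (by norm_num) (by fun_prop) hcy (by fun_prop)
    (fun x _ => le_rfl) s

theorem two_mul_integral_deriv_sq_le {y y₁ y₂ : ℝ → ℝ}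
    (hy : ∀ x, HasDerivAt y (y₁ x) x) (hy₁ : ∀ x, HasDerivAt y₁ (y₂ x) x) (hy₂ : Continuous y₂)
    (hl : y (-1) = 0) (hr : y 0 = 0) (s : ℝ) :
    2 * s * (∫ x in (-1)..0, y₁ x ^ 2) ≤
      s ^ 2 * (∫ x in (-1)..0, y x ^ 2) + ∫ x in (-1)..0, y₂ x ^ 2 := by
  have hcy : Continuous y := continuous_of_forall_hasDerivAt hy
  have hcy₁ : Continuous y₁ := continuous_of_forall_hasDerivAt hy₁
  have hparts : ∫ x in (-1)..0, y₁ x ^ 2 = ∫ x in (-1)..0, -(y x * y₂ x) := by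
    rw [intervalIntegral.integral_neg, intervalIntegral.integral_mul_deriv_eq_deriv_mul
      (fun x _ => hy x) (fun x _ => hy₁ x) (hcy₁.intervalIntegrable _ _)
      (hy₂.intervalIntegrable _ _), hl, hr]
    simp [sq]
  rw [hparts]
  exact two_mul_integral_le_of_abs_le (by norm_num) (by fun_prop) hcy hy₂
    (fun x _ => (abs_neg _).le) s

theorem integral_deriv_mul_eq {y₁ y₂ y₃ : ℝ → ℝ} (hy₁ : ∀ x, HasDerivAt y₁ (y₂ x) x)
    (hy₂ : ∀ x, HasDerivAt y₂ (y₃ x) x) (hy₃ : Continuous y₃) (hr₁ : y₁ 0 = 0) (c : ℝ) :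
    ∫ x in (-1)..0, y₁ x * (y₃ x + c * y₁ x) =
      -(y₁ (-1) * y₂ (-1)) - (∫ x in (-1)..0, y₂ x ^ 2) + c * ∫ x in (-1)..0, y₁ x ^ 2 := by
  have hcy₁ : Continuous y₁ := continuous_of_forall_hasDerivAt hy₁
  have hcy₂ : Continuous y₂ := continuous_of_forall_hasDerivAt hy₂
  have hparts := intervalIntegral.integral_mul_deriv_eq_deriv_mul (a := -1) (b := 0)
    (fun x _ => hy₁ x) (fun x _ => hy₂ x) (hcy₂.intervalIntegrable _ _) (hy₃.intervalIntegrable _ _)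
  rw [hr₁] at hparts
  simp_rw [mul_add, mul_left_comm _ c, ← sq]
  rw [intervalIntegral.integral_add (by apply Continuous.intervalIntegrable; fun_prop)
    (by apply Continuous.intervalIntegrable; fun_prop), intervalIntegral.integral_const_mul,
    hparts]
  simp [sq]

/-- With `m = √λ`, the boundary term `λ p q` is split as `K m³ p² + (m / K) q²`, matching the
scalings `p² ∼ λ^(-3/2)` and `q² ∼ λ^(-1/2)`. -/
theorem two_mul_sq_mul_abs_mul_le {m K c I₀ I₂ I₃ F p q : ℝ} (hK : 0 < K) (hc : 0 < c)
    (hKm : 4 ≤ K * m) (hKc : 8 * c ≤ K ^ 2) (hI₂ : 0 ≤ I₂)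
    (hp : ∀ s, s * p ^ 2 ≤ s ^ 2 * I₀ + F) (hq : ∀ s, s * (q ^ 2 - I₂) ≤ s ^ 2 * I₂ + I₃) :
    2 * m ^ 2 * |p * q| ≤ K * (m ^ 6 * I₀ + F) + m ^ 2 * I₂ / 2 + I₃ / (2 * c) := by
  obtain ⟨t, rfl⟩ : ∃ t, t * K = m := ⟨m / K, div_mul_cancel₀ m hK.ne'⟩
  have ht : 0 < t := by nlinarith
  have am_gm : 2 * (t * K) ^ 2 * |p * q| ≤ K * ((t * K) ^ 3 * p ^ 2) + t * q ^ 2 := by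
    rw [abs_mul, ← sq_abs p, ← sq_abs q]
    linear_combination mul_nonneg ht.le (sq_nonneg (K ^ 2 * t * |p| - |q|))
  have hq' : t * q ^ 2 ≤ t * I₂ + 2 * c * t ^ 2 * I₂ + I₃ / (2 * c) := by
    have := div_le_div_of_nonneg_right (hq (2 * c * t)) (by positivity : 0 ≤ 2 * c)
    field_simp at this ⊢
    linarith
  have hcoef : t * I₂ + 2 * c * t ^ 2 * I₂ ≤ (t * K) ^ 2 * I₂ / 2 := by
    nlinarith [mul_le_mul_of_nonneg_left hKc (by positivity : 0 ≤ t ^ 2 * I₂),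
      mul_le_mul_of_nonneg_left hKm (by positivity : 0 ≤ t * I₂)]
  linarith [mul_le_mul_of_nonneg_left (hp ((t * K) ^ 3)) hK.le]

theorem exists_bound_of_interpolation_inequalities (a : ℝ) {lam₀ : ℝ} (hlam₀ : 0 < lam₀) :
    ∃ C > 0, ∀ lam ≥ lam₀, ∀ I₀ I₁ I₂ I₃ F p q g : ℝ, 0 ≤ I₀ → 0 ≤ I₁ → 0 ≤ I₂ → 0 ≤ F →
      (∀ s, s * p ^ 2 ≤ s ^ 2 * I₀ + F) → (∀ s, 2 * s * I₁ ≤ s ^ 2 * I₀ + I₂) →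
      (∀ s, s * (q ^ 2 - I₂) ≤ s ^ 2 * I₂ + I₃) → (∀ s, 2 * s * g ≤ s ^ 2 * I₁ + F) →
      I₂ + lam * I₁ = a * I₁ - p * q + g → I₃ ≤ 2 * F + 2 * (a - lam) ^ 2 * I₁ →
      lam ^ 3 * I₀ + lam ^ 2 * I₁ + lam * I₂ + I₃ ≤ C * (F + lam ^ 3 * I₀) := by
  set c := 2 * (1 + |a| / lam₀) ^ 2
  set K := 4 / √lam₀ + 4 * c
  set Ca := |a| * (2 * |a| + 1) / lam₀ ^ 2
  set M := Ca + K + 3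
  have hc : 2 ≤ c := by nlinarith [(by positivity : 0 ≤ |a| / lam₀)]
  have hK : 0 < K := by positivity
  have hKc : 8 * c ≤ K ^ 2 := by nlinarith [(by positivity : 0 ≤ 4 / √lam₀)]
  refine ⟨3 + (1 + c) * M, by positivity, ?_⟩
  intro lam hlam I₀ I₁ I₂ I₃ F p q g hI₀ hI₁ hI₂ hF hp hI₁I₂ hq hg hid he
  have hlam_pos : 0 < lam := hlam₀.trans_le hlam
  have hKm : 4 ≤ K * √lam :=
    calc 4 = 4 / √lam₀ * √lam₀ := by field_simp
      _ ≤ K * √lam := mul_le_mul (by linarith) (Real.sqrt_le_sqrt hlam) (by positivity) hK.le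
  have hpq : 2 * lam * |p * q| ≤ K * (lam ^ 3 * I₀ + F) + lam * I₂ / 2 + I₃ / (2 * c) := by
    have := two_mul_sq_mul_abs_mul_le hK (by positivity) hKm hKc hI₂ hp hq
    rwa [show √lam ^ 6 = (√lam ^ 2) ^ 3 by ring, Real.sq_sqrt hlam_pos.le] at this
  have hg' : 2 * lam * g ≤ lam ^ 2 * I₁ / 2 + 2 * F := by
    linarith [hg (lam / 2)]
  have ha : 2 * lam * (a * I₁) ≤ lam * I₂ / 2 + Ca * (lam ^ 3 * I₀) := by
    have h2a : 2 * |a| * I₁ ≤ |a| * (2 * |a| + 1) * I₀ + I₂ / 2 := by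
      refine le_of_mul_le_mul_left ?_ (by positivity : 0 < 2 * |a| + 1)
      linarith [mul_le_mul_of_nonneg_left (hI₁I₂ (2 * |a| + 1)) (abs_nonneg a)]
    have hI₀' : lam * I₀ ≤ lam ^ 3 * I₀ / lam₀ ^ 2 := by
      rw [le_div_iff₀ (by positivity)]
      linarith [mul_le_mul_of_nonneg_left (pow_le_pow_left₀ hlam₀.le hlam 2)
        (mul_nonneg hlam_pos.le hI₀)]
    have : Ca * (lam ^ 3 * I₀) = |a| * (2 * |a| + 1) * (lam ^ 3 * I₀ / lam₀ ^ 2) := by ring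
    linarith [mul_le_mul_of_nonneg_left (mul_le_mul_of_nonneg_right (le_abs_self a) hI₁)
      hlam_pos.le, mul_le_mul_of_nonneg_left h2a hlam_pos.le,
      mul_le_mul_of_nonneg_left hI₀' (by positivity : 0 ≤ |a| * (2 * |a| + 1))]
  have hc' : 2 * (a - lam) ^ 2 ≤ c * lam ^ 2 := by
    have h : |a| ≤ |a| / lam₀ * lam := by
      rw [div_mul_eq_mul_div, le_div_iff₀ hlam₀]
      exact mul_le_mul_of_nonneg_left hlam (abs_nonneg a)
    have : (a - lam) ^ 2 ≤ (lam + |a| / lam₀ * lam) ^ 2 :=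
      sq_le_sq' (by linarith [neg_abs_le a]) (by linarith [le_abs_self a])
    linarith
  have he' : I₃ ≤ 2 * F + c * (lam ^ 2 * I₁) := by
    linarith [mul_le_mul_of_nonneg_right hc' hI₁]
  have he'' : I₃ / (2 * c) ≤ F / 2 + lam ^ 2 * I₁ / 2 := by
    rw [div_le_iff₀ (by positivity)]
    linarith [mul_le_mul_of_nonneg_right hc hF]
  have hA : 0 ≤ lam ^ 3 * I₀ := by positivity
  have hlow : lam * I₂ + lam ^ 2 * I₁ ≤ M * (F + lam ^ 3 * I₀) := by
    have hid' : 2 * lam * (I₂ + lam * I₁) = 2 * lam * (a * I₁ - p * q + g) := by rw [hid]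
    have hCa : 0 ≤ Ca := by positivity
    linarith [mul_le_mul_of_nonneg_left (neg_le_abs (p * q)) hlam_pos.le, mul_nonneg hCa hF]
  have hB : lam ^ 2 * I₁ ≤ M * (F + lam ^ 3 * I₀) := by linarith [mul_nonneg hlam_pos.le hI₂]
  linarith [mul_le_mul_of_nonneg_left hB (by positivity : (0:ℝ) ≤ c)]

theorem exists_third_order_energy_estimate (a : ℝ) {lam₀ : ℝ} (hlam₀ : 0 < lam₀) :
    ∃ C > 0, ∀ lam ≥ lam₀, ∀ y y₁ y₂ y₃ : ℝ → ℝ, (∀ x, HasDerivAt y (y₁ x) x) →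
      (∀ x, HasDerivAt y₁ (y₂ x) x) → (∀ x, HasDerivAt y₂ (y₃ x) x) → Continuous y₃ →
      y (-1) = 0 → y 0 = 0 → y₁ 0 = 0 →
      lam ^ 3 * (∫ x in (-1)..0, y x ^ 2) + lam ^ 2 * (∫ x in (-1)..0, y₁ x ^ 2) +
          lam * (∫ x in (-1)..0, y₂ x ^ 2) + (∫ x in (-1)..0, y₃ x ^ 2) ≤
        C * ((∫ x in (-1)..0, (y₃ x + (a - lam) * y₁ x) ^ 2) +
          lam ^ 3 * ∫ x in (-1)..0, y x ^ 2) := by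
  obtain ⟨C, hC, hest⟩ := exists_bound_of_interpolation_inequalities a hlam₀
  refine ⟨C, hC, fun lam hlam y y₁ y₂ y₃ hy hy₁ hy₂ hy₃ hl hr hr₁ => ?_⟩
  have hcy₁ : Continuous y₁ := continuous_of_forall_hasDerivAt hy₁
  have hcy₂ : Continuous y₂ := continuous_of_forall_hasDerivAt hy₂
  have hsq : ∀ u : ℝ → ℝ, 0 ≤ ∫ x in (-1)..0, u x ^ 2 := fun u =>
    intervalIntegral.integral_nonneg (by norm_num) fun x _ => sq_nonneg _
  refine hest lam hlam _ _ _ _ _ (y₁ (-1)) (y₂ (-1))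
    (-∫ x in (-1)..0, y₁ x * (y₃ x + (a - lam) * y₁ x))
    (hsq y) (hsq y₁) (hsq y₂) (hsq _) (mul_sq_deriv_neg_one_le hy hy₁ hy₂ hy₃ hl hr hr₁ _)
    (two_mul_integral_deriv_sq_le hy hy₁ hcy₂ hl hr) (mul_sq_neg_one_sub_integral_sq_le hy₂ hy₃)
    (fun s => ?_) ?_ (integral_sq_le_two_mul_integral_sq_add (by norm_num) hy₃ hcy₁ _)
  · rw [← intervalIntegral.integral_neg]
    exact two_mul_integral_le_of_abs_le (by norm_num) (by fun_prop) hcy₁ (by fun_prop)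
      (fun x _ => (abs_neg _).le) s
  · rw [integral_deriv_mul_eq hy₁ hy₂ hy₃ hr₁]
    ring

theorem third_order_elliptic_estimate_general (a lam₀ : ℝ) (hlam₀ : 0 < lam₀) :
    ∃ C : ℝ, 0 < C ∧ ∀ lam : ℝ, lam₀ ≤ lam → ∀ y : ℝ → ℝ, ContDiff ℝ 3 y →
      y (-1) = 0 → y 0 = 0 → deriv y 0 = 0 →
      ∑ k ∈ Finset.range 4, lam^k * (∫ x in (-1:ℝ)..0, (iteratedDeriv (3-k) y x)^2) ≤
        C * ((∫ x in (-1:ℝ)..0, (iteratedDeriv 3 y x + (a - lam) * deriv y x)^2) +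
             lam^3 * (∫ x in (-1:ℝ)..0, (y x)^2)) := by
  obtain ⟨C, hC, hest⟩ := exists_third_order_energy_estimate a hlam₀
  refine ⟨C, hC, fun lam hlam y hy hl hr hr₁ => ?_⟩
  have hderiv : ∀ k < 3, ∀ x, HasDerivAt (iteratedDeriv k y) (iteratedDeriv (k + 1) y x) x :=
    fun k hk x => by
      rw [iteratedDeriv_succ]
      exact (hy.differentiable_iteratedDeriv k (by exact_mod_cast hk) x).hasDerivAt
  have hbound := hest lam hlam y (deriv y) (iteratedDeriv 2 y) (iteratedDeriv 3 y)
    (by simpa using hderiv 0 (by norm_num)) (by simpa using hderiv 1 (by norm_num))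
    (hderiv 2 (by norm_num)) (hy.continuous_iteratedDeriv' 3) hl hr hr₁
  norm_num [Finset.sum_range_succ]
  linarith

theorem third_order_elliptic_estimate (a lam₀ : ℝ) (ha : 0 ≤ a) (hlam₀ : 0 < lam₀) :
    ∃ C : ℝ, 0 < C ∧ ∀ lam : ℝ, lam₀ ≤ lam → ∀ y : ℝ → ℝ, ContDiff ℝ 3 y →
      y (-1) = 0 → y 0 = 0 → deriv y 0 = 0 →
      ∑ k ∈ Finset.range 4, lam^k * (∫ x in (-1:ℝ)..0, (iteratedDeriv (3-k) y x)^2) ≤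
        C * ((∫ x in (-1:ℝ)..0, (iteratedDeriv 3 y x + (a - lam) * deriv y x)^2) +
             lam^3 * (∫ x in (-1:ℝ)..0, (y x)^2)) :=
  third_order_elliptic_estimate_general a lam₀ hlam₀
end

section
/- Let a ≥ 0 and for each j ≥ 1 set λ_j = (jπ)² and define P_j f := f''' - (λ_j - a) f' for f ∈ H³(-1,0). Then there exists a constant C₁ ≥ 1 such that for all n ∈ ℕ, all j ≥ 1, and all f ∈ H^{3n}(-1,0): ‖f‖²_{H^{2n}(-1,0)} ≤ C₁ⁿ ∑_{i=0}^{n} λ_j^{2n-2i} ‖P_j^i f‖²_{L²(-1,0)}. -/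
/-!
Write `P f = f''' - μ f'` with `μ = λ - a`, so that `|μ| ≤ (1 + |a|) λ` once `λ ≥ 1`.

For `n = 1` the tool is the interpolation inequality `∫ f'² ≤ C ε⁻¹ ∫ f² + C ε ∫ f''²` on
`(-1, 0)`, `0 < ε ≤ 1`. On an interval of length `ℓ` it holds with `ε = ℓ²`: compare `f'` with its
value at a mean-value point of `f`, which is controlled by the endpoint values of `f`; for smaller
`ε`, cut `(-1, 0)` into pieces of length about `√ε`. Used with `ε ≈ 1/λ` for `f` and for `f'`,
together with `f''' = P f + μ f'`, it gives `‖f‖²_{H²} ≤ K (λ² ‖f‖²_{L²} + ‖P f‖²_{L²})`.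

Since `P` commutes with differentiation, the same bound for `f^{(k)}` gives
`‖f‖²_{H^{k+2}} ≤ (K + 1) (λ² ‖f‖²_{H^k} + ‖P f‖²_{H^k})`, and induction on `n`, applied to `f`
and to `P f`, produces the weighted sum of the `‖Pⁱ f‖²`.
-/

open Set intervalIntegral

lemma sq_le_sq_add_integral {f f' : ℝ → ℝ} (hf : ∀ x, HasDerivAt f (f' x) x)
    (hf' : Continuous f') {c d s t α : ℝ} (hs : s ∈ Icc c d) (ht : t ∈ Icc c d) (hα : 0 < α) :
    f t ^ 2 ≤ f s ^ 2 + α * (∫ x in c..d, f x ^ 2) + α⁻¹ * ∫ x in c..d, f' x ^ 2 := by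
  have hfc : Continuous f := continuous_iff_continuousAt.2 fun x => (hf x).continuousAt
  have hbound : Continuous fun x => α * f x ^ 2 + α⁻¹ * f' x ^ 2 := by fun_prop
  have hftc : ∫ x in s..t, 2 * (f x * f' x) = f t ^ 2 - f s ^ 2 := by
    refine integral_eq_sub_of_hasDerivAt (f := fun x => f x ^ 2) (fun x _ => ?_)
      ((by fun_prop : Continuous fun x => 2 * (f x * f' x)).intervalIntegrable _ _)
    exact ((hf x).fun_pow 2).congr_deriv (by push_cast; ring)
  have hnonneg : 0 ≤ ∫ x in c..d, (α * f x ^ 2 + α⁻¹ * f' x ^ 2) :=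
    integral_nonneg (hs.1.trans hs.2) fun x _ => by positivity
  calc f t ^ 2 = f s ^ 2 + ∫ x in s..t, 2 * (f x * f' x) := by rw [hftc]; ring
    _ ≤ f s ^ 2 + |∫ x in s..t, (α * f x ^ 2 + α⁻¹ * f' x ^ 2)| := by
      gcongr
      refine (le_abs_self _).trans (norm_integral_le_abs_of_norm_le
        (f := fun x => 2 * (f x * f' x)) (Filter.Eventually.of_forall fun x => ?_)
        (hbound.intervalIntegrable _ _))
      simpa only [Real.norm_eq_abs, abs_mul, abs_two, sq_abs, ← mul_assoc] using
        two_mul_le_add_mul_sq (a := |f x|) (b := |f' x|) hα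
    _ ≤ f s ^ 2 + ∫ x in c..d, (α * f x ^ 2 + α⁻¹ * f' x ^ 2) := by
      gcongr
      refine (abs_integral_mono_interval (uIoc_subset_uIoc_of_uIcc_subset_uIcc
        (uIcc_subset_uIcc (Icc_subset_uIcc hs) (Icc_subset_uIcc ht)))
        (Filter.Eventually.of_forall fun x => by positivity)
        (hbound.intervalIntegrable _ _)).trans_eq (abs_of_nonneg hnonneg)
    _ = f s ^ 2 + α * (∫ x in c..d, f x ^ 2) + α⁻¹ * ∫ x in c..d, f' x ^ 2 := by
      rw [intervalIntegral.integral_add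
        ((by fun_prop : Continuous fun x => α * f x ^ 2).intervalIntegrable _ _)
        ((by fun_prop : Continuous fun x => α⁻¹ * f' x ^ 2).intervalIntegrable _ _),
        integral_const_mul, integral_const_mul, add_assoc]

lemma mul_le_integral_add_of_forall_le {g : ℝ → ℝ} (hg : Continuous g) {c d K C : ℝ}
    (hcd : c ≤ d) (h : ∀ s ∈ Icc c d, K ≤ g s + C) :
    (d - c) * K ≤ (∫ x in c..d, g x) + (d - c) * C := by
  have := integral_mono_on (μ := MeasureTheory.volume) (g := fun x => g x + C) hcd
    intervalIntegrable_const ((hg.add continuous_const).intervalIntegrable _ _) h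
  rwa [intervalIntegral.integral_const, integral_add (hg.intervalIntegrable _ _)
    intervalIntegrable_const, intervalIntegral.integral_const, smul_eq_mul, smul_eq_mul] at this

lemma integral_le_mul_of_forall_le {g : ℝ → ℝ} (hg : Continuous g) {c d C : ℝ}
    (hcd : c ≤ d) (h : ∀ s ∈ Icc c d, g s ≤ C) :
    ∫ x in c..d, g x ≤ (d - c) * C := by
  simpa using integral_mono_on (μ := MeasureTheory.volume) hcd (hg.intervalIntegrable _ _)
    intervalIntegrable_const h

lemma mul_sq_le_integral_sq {f u : ℝ → ℝ} (hfu : ∀ x, HasDerivAt f (u x) x)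
    (hu : Continuous u) {c d t : ℝ} (hcd : c < d) (ht : t ∈ Icc c d) :
    (d - c) * f t ^ 2 ≤
      17 * (∫ x in c..d, f x ^ 2) + (d - c) ^ 2 / 16 * ∫ x in c..d, u x ^ 2 := by
  have hf : Continuous f := continuous_iff_continuousAt.2 fun x => (hfu x).continuousAt
  have := mul_le_integral_add_of_forall_le (by fun_prop : Continuous fun x => f x ^ 2) hcd.le
    fun s hs => (sq_le_sq_add_integral hfu hu hs ht
      (by positivity : 0 < 16 / (d - c))).trans_eq (add_assoc _ _ _)
  have e : (d - c) * (16 / (d - c) * (∫ x in c..d, f x ^ 2)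
        + (16 / (d - c))⁻¹ * ∫ x in c..d, u x ^ 2)
      = 16 * (∫ x in c..d, f x ^ 2) + (d - c) ^ 2 / 16 * ∫ x in c..d, u x ^ 2 := by
    field_simp [(sub_pos.2 hcd).ne']
  linarith

lemma integral_sq_deriv_le {f u w : ℝ → ℝ} (hfu : ∀ x, HasDerivAt f (u x) x)
    (huw : ∀ x, HasDerivAt u (w x) x) (hw : Continuous w) {c d : ℝ} (hcd : c < d) :
    ∫ x in c..d, u x ^ 2 ≤
      272 / (d - c) ^ 2 * (∫ x in c..d, f x ^ 2) + 8 * (d - c) ^ 2 * ∫ x in c..d, w x ^ 2 := by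
  have hu : Continuous u := continuous_iff_continuousAt.2 fun x => (huw x).continuousAt
  have hf : Continuous f := continuous_iff_continuousAt.2 fun x => (hfu x).continuousAt
  have hL : 0 < d - c := sub_pos.2 hcd
  set A := ∫ x in c..d, f x ^ 2
  set B := ∫ x in c..d, u x ^ 2 with hB
  set E := ∫ x in c..d, w x ^ 2 with hE
  obtain ⟨ξ, hξ, hslope⟩ := exists_hasDerivAt_eq_slope f u hcd hf.continuousOn fun x _ => hfu x
  have hBξ : B ≤ 2 * (d - c) * u ξ ^ 2 + 4 * (d - c) ^ 2 * E := by
    have := integral_le_mul_of_forall_le (by fun_prop : Continuous fun x => u x ^ 2) hcd.le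
      fun x hx => sq_le_sq_add_integral huw hw (Ioo_subset_Icc_self hξ) hx
        (by positivity : 0 < (2 * (d - c))⁻¹)
    rw [← hB, ← hE] at this
    have e : (d - c) * (u ξ ^ 2 + (2 * (d - c))⁻¹ * B + (2 * (d - c))⁻¹⁻¹ * E)
        = (d - c) * u ξ ^ 2 + B / 2 + 2 * (d - c) ^ 2 * E := by
      field_simp
    linarith
  have hc := mul_sq_le_integral_sq hfu hu hcd (left_mem_Icc.2 hcd.le)
  have hd := mul_sq_le_integral_sq hfu hu hcd (right_mem_Icc.2 hcd.le)
  have hslope' : (d - c) * u ξ = f d - f c := by rw [hslope]; field_simp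
  have key : (d - c) ^ 2 * B ≤ 272 * A + 8 * (d - c) ^ 4 * E := by
    have h1 : (d - c) ^ 2 * B ≤ 2 * (d - c) * (f d - f c) ^ 2 + 4 * (d - c) ^ 4 * E := by
      rw [← hslope']
      linear_combination (d - c) ^ 2 * hBξ
    have h2 : 2 * (d - c) * (f d - f c) ^ 2 ≤ 4 * (d - c) * f d ^ 2 + 4 * (d - c) * f c ^ 2 := by
      nlinarith [mul_nonneg hL.le (sq_nonneg (f d + f c))]
    linarith
  rw [div_mul_eq_mul_div, div_add' _ _ _ (by positivity), le_div_iff₀ (by positivity)]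
  linear_combination key

lemma exists_nat_sq_div_mem_Icc {L ε : ℝ} (hε : 0 < ε) (hεL : ε ≤ L ^ 2) (hL : 0 < L) :
    ∃ N : ℕ, 0 < N ∧ (L / N) ^ 2 ∈ Icc (ε / 4) ε := by
  have hs : 0 < √ε := Real.sqrt_pos.2 hε
  have hsL : √ε ≤ L := (Real.sqrt_le_left hL.le).2 hεL
  have hsq : √ε ^ 2 = ε := Real.sq_sqrt hε.le
  have hlow : L / √ε ≤ ⌈L / √ε⌉₊ := Nat.le_ceil _
  have hhigh : (⌈L / √ε⌉₊ : ℝ) < L / √ε + 1 := Nat.ceil_lt_add_one (by positivity)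
  have hone : 1 ≤ L / √ε := (one_le_div hs).2 hsL
  have hN : (0 : ℝ) < ⌈L / √ε⌉₊ := by linarith
  have hsN : √ε * (L / √ε) = L := by field_simp
  refine ⟨⌈L / √ε⌉₊, by exact_mod_cast hN, ?_, ?_⟩
  · have : √ε / 2 ≤ L / ⌈L / √ε⌉₊ := by
      rw [le_div_iff₀ hN]
      nlinarith
    nlinarith
  · have : L / ⌈L / √ε⌉₊ ≤ √ε := by
      rw [div_le_iff₀ hN]
      nlinarith
    nlinarith [div_pos hL hN]

lemma integral_sq_deriv_le_of_le_sq {f u w : ℝ → ℝ} (hfu : ∀ x, HasDerivAt f (u x) x)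
    (huw : ∀ x, HasDerivAt u (w x) x) (hw : Continuous w) {c d ε : ℝ} (hcd : c < d)
    (hε : 0 < ε) (hεL : ε ≤ (d - c) ^ 2) :
    ∫ x in c..d, u x ^ 2 ≤ 1088 / ε * (∫ x in c..d, f x ^ 2) + 8 * ε * ∫ x in c..d, w x ^ 2 := by
  have hu : Continuous u := continuous_iff_continuousAt.2 fun x => (huw x).continuousAt
  have hf : Continuous f := continuous_iff_continuousAt.2 fun x => (hfu x).continuousAt
  obtain ⟨N, hN, hmesh⟩ := exists_nat_sq_div_mem_Icc hε hεL (sub_pos.2 hcd)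
  set h := (d - c) / N
  have hh : 0 < h := div_pos (sub_pos.2 hcd) (by exact_mod_cast hN)
  set p : ℕ → ℝ := fun k => c + k * h
  have hsum : ∀ g : ℝ → ℝ, Continuous g →
      ∑ k ∈ Finset.range N, ∫ x in p k..p (k + 1), g x = ∫ x in c..d, g x := by
    intro g hg
    have hpN : p N = d := by simp only [p, h]; field_simp; ring
    simpa [p, hpN] using sum_integral_adjacent_intervals (μ := MeasureTheory.volume) (a := p)
      (n := N) fun k _ => hg.intervalIntegrable _ _
  have hpiece : ∀ k ∈ Finset.range N, ∫ x in p k..p (k + 1), u x ^ 2 ≤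
      1088 / ε * (∫ x in p k..p (k + 1), f x ^ 2) + 8 * ε * ∫ x in p k..p (k + 1), w x ^ 2 := by
    intro k _
    have hlen : p (k + 1) - p k = h := by simp only [p]; push_cast; ring
    have := integral_sq_deriv_le hfu huw hw (show p k < p (k + 1) by linarith)
    rw [hlen] at this
    refine this.trans (add_le_add ?_ ?_)
    · refine mul_le_mul_of_nonneg_right ?_ (integral_nonneg (by linarith) fun x _ => sq_nonneg _)
      rw [div_le_div_iff₀ (by positivity) hε]
      linarith [hmesh.1]
    · refine mul_le_mul_of_nonneg_right ?_ (integral_nonneg (by linarith) fun x _ => sq_nonneg _)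
      linarith [hmesh.2]
  calc ∫ x in c..d, u x ^ 2 = ∑ k ∈ Finset.range N, ∫ x in p k..p (k + 1), u x ^ 2 :=
        (hsum _ (by fun_prop)).symm
    _ ≤ ∑ k ∈ Finset.range N, (1088 / ε * (∫ x in p k..p (k + 1), f x ^ 2)
          + 8 * ε * ∫ x in p k..p (k + 1), w x ^ 2) := Finset.sum_le_sum hpiece
    _ = 1088 / ε * (∫ x in c..d, f x ^ 2) + 8 * ε * ∫ x in c..d, w x ^ 2 := by
        rw [Finset.sum_add_distrib, ← Finset.mul_sum, ← Finset.mul_sum, hsum _ (by fun_prop),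
          hsum _ (by fun_prop)]

lemma sum_three_le_of_interpolation {b Λ A₀ A₁ A₂ G : ℝ} (hb : 1 ≤ b) (hΛ : 1 ≤ Λ)
    (hA₀ : 0 ≤ A₀) (hG : 0 ≤ G)
    (h₁ : ∀ ε, 0 < ε → ε ≤ 1 → A₁ ≤ b / ε * A₀ + b * ε * A₂)
    (h₂ : Λ * A₂ ≤ b * Λ ^ 2 * A₁ + b * G) :
    A₀ + A₁ + A₂ ≤ 9 * b ^ 4 * (Λ ^ 2 * A₀ + G) := by
  have hΛ0 : 0 < Λ := by linarith
  have hΛ2 : 1 ≤ Λ ^ 2 := one_le_pow₀ hΛ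
  -- with `ε = 1 / (2 b² Λ)`, inserting `h₂` into `h₁` returns at most half of `A₁`
  have hΛA₁ : Λ ^ 2 * A₁ ≤ 4 * b ^ 3 * Λ ^ 3 * A₀ + G := by
    have hε : 1 ≤ 2 * b ^ 2 * Λ := by nlinarith [one_le_pow₀ hb (n := 2)]
    have h := h₁ (2 * b ^ 2 * Λ)⁻¹ (by positivity) (inv_le_one_of_one_le₀ hε)
    have e : Λ ^ 2 * (b / (2 * b ^ 2 * Λ)⁻¹ * A₀ + b * (2 * b ^ 2 * Λ)⁻¹ * A₂)
        = 2 * b ^ 3 * Λ ^ 3 * A₀ + (Λ * A₂) / (2 * b) := by field_simp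
    have e' : (b * Λ ^ 2 * A₁ + b * G) / (2 * b) = Λ ^ 2 * A₁ / 2 + G / 2 := by field_simp
    have := div_le_div_of_nonneg_right h₂ (by positivity : (0:ℝ) ≤ 2 * b)
    nlinarith [mul_le_mul_of_nonneg_left h (sq_nonneg Λ)]
  have hA₁ : A₁ ≤ 4 * b ^ 3 * Λ ^ 2 * A₀ + G := by
    refine le_of_mul_le_mul_left (hΛA₁.trans ?_) (by positivity : 0 < Λ ^ 2)
    have h3 : Λ ^ 3 * A₀ ≤ Λ ^ 4 * A₀ :=
      mul_le_mul_of_nonneg_right (pow_le_pow_right₀ hΛ (by norm_num)) hA₀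
    nlinarith [mul_le_mul_of_nonneg_left h3 (by positivity : 0 ≤ 4 * b ^ 3),
      mul_le_mul_of_nonneg_right hΛ2 hG]
  have hA₂ : A₂ ≤ 4 * b ^ 4 * Λ ^ 2 * A₀ + 2 * b * G := by
    refine le_of_mul_le_mul_left (h₂.trans ?_) hΛ0
    nlinarith [mul_le_mul_of_nonneg_left hΛA₁ (by positivity : 0 ≤ b),
      mul_le_mul_of_nonneg_right hΛ (by positivity : 0 ≤ b * G)]
  have hb3 : b ^ 3 ≤ b ^ 4 := pow_le_pow_right₀ hb (by norm_num)
  have hb1 : 1 ≤ b ^ 3 := one_le_pow₀ hb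
  have hB : 0 ≤ Λ ^ 2 * A₀ := by positivity
  nlinarith [mul_le_mul_of_nonneg_right hΛ2 hA₀, mul_le_mul_of_nonneg_right hb3 hB,
    mul_le_mul_of_nonneg_right (hb1.trans hb3) hB, mul_le_mul_of_nonneg_right (hb1.trans hb3) hG,
    mul_le_mul_of_nonneg_right (hb.trans (le_self_pow₀ hb (by norm_num : 4 ≠ 0))) hG]

lemma iteratedDeriv_iteratedDeriv (m k : ℕ) (f : ℝ → ℝ) :
    iteratedDeriv m (iteratedDeriv k f) = iteratedDeriv (m + k) f := by
  simp only [iteratedDeriv_eq_iterate, Function.iterate_add_apply]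

lemma ContDiff.iteratedDeriv' {m k : ℕ} {f : ℝ → ℝ} (hf : ContDiff ℝ (m + k : ℕ) f) :
    ContDiff ℝ m (iteratedDeriv k f) := by
  rw [iteratedDeriv_eq_iterate]
  exact hf.iterate_deriv' m k

lemma ContDiff.hasDerivAt_iteratedDeriv {n m : ℕ} {f : ℝ → ℝ} (hf : ContDiff ℝ n f)
    (hm : m < n) (x : ℝ) : HasDerivAt (iteratedDeriv m f) (iteratedDeriv (m + 1) f x) x := by
  rw [iteratedDeriv_succ]
  exact (hf.differentiable_iteratedDeriv m (by exact_mod_cast hm) x).hasDerivAt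

/-- The paper's `P_j` is `thirdOrderOp (λ_j - a)`. -/
noncomputable def thirdOrderOp (μ : ℝ) (f : ℝ → ℝ) : ℝ → ℝ :=
  fun x => iteratedDeriv 3 f x - μ * deriv f x

lemma ContDiff.thirdOrderOp {μ : ℝ} {m : ℕ} {f : ℝ → ℝ} (hf : ContDiff ℝ (m + 3 : ℕ) f) :
    ContDiff ℝ m (thirdOrderOp μ f) :=
  hf.iteratedDeriv'.sub (contDiff_const.mul (ContDiff.deriv' (hf.of_le (by norm_cast; omega))))

lemma iteratedDeriv_thirdOrderOp {μ : ℝ} {k : ℕ} {f : ℝ → ℝ} (hf : ContDiff ℝ (k + 3 : ℕ) f) :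
    iteratedDeriv k (thirdOrderOp μ f) = thirdOrderOp μ (iteratedDeriv k f) := by
  ext x
  have hd : ContDiff ℝ k (deriv f) := ContDiff.deriv' (hf.of_le (by norm_cast; omega))
  change iteratedDeriv k (fun y => iteratedDeriv 3 f y - μ * deriv f y) x = _
  rw [thirdOrderOp, iteratedDeriv_fun_sub hf.iteratedDeriv'.contDiffAt
      (contDiff_const.mul hd).contDiffAt, iteratedDeriv_const_mul_field, ← iteratedDeriv_one,
    ← iteratedDeriv_one (f := iteratedDeriv k f)]
  simp only [iteratedDeriv_iteratedDeriv, add_comm]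

noncomputable def l2NormSq (f : ℝ → ℝ) : ℝ := ∫ x in (-1 : ℝ)..0, f x ^ 2

noncomputable def sobolevNormSq (k : ℕ) (f : ℝ → ℝ) : ℝ :=
  ∑ m ∈ Finset.range (k + 1), l2NormSq (iteratedDeriv m f)

lemma l2NormSq_nonneg (f : ℝ → ℝ) : 0 ≤ l2NormSq f :=
  integral_nonneg (by norm_num) fun _ _ => sq_nonneg _

lemma l2NormSq_add_mul_le {g h : ℝ → ℝ} (hg : Continuous g) (hh : Continuous h) (μ : ℝ) :
    l2NormSq (fun x => g x + μ * h x) ≤ 2 * l2NormSq g + 2 * μ ^ 2 * l2NormSq h := by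
  have := integral_mono_on (μ := MeasureTheory.volume) (by norm_num : (-1 : ℝ) ≤ 0)
    ((by fun_prop : Continuous fun x => (g x + μ * h x) ^ 2).intervalIntegrable _ _)
    ((by fun_prop : Continuous fun x => 2 * g x ^ 2 + 2 * μ ^ 2 * h x ^ 2).intervalIntegrable _ _)
    fun x _ => by nlinarith [sq_nonneg (g x - μ * h x)]
  rwa [integral_add ((by fun_prop : Continuous fun x => 2 * g x ^ 2).intervalIntegrable _ _)
    ((by fun_prop : Continuous fun x => 2 * μ ^ 2 * h x ^ 2).intervalIntegrable _ _),
    integral_const_mul, integral_const_mul] at this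

lemma l2NormSq_iteratedDeriv_le_sobolevNormSq {m k : ℕ} (h : m ≤ k) (f : ℝ → ℝ) :
    l2NormSq (iteratedDeriv m f) ≤ sobolevNormSq k f :=
  Finset.single_le_sum (f := fun m => l2NormSq (iteratedDeriv m f))
    (fun _ _ => l2NormSq_nonneg _) (Finset.mem_range.2 (Nat.lt_succ_of_le h))

lemma sobolevNormSq_nonneg (k : ℕ) (f : ℝ → ℝ) : 0 ≤ sobolevNormSq k f :=
  Finset.sum_nonneg fun _ _ => l2NormSq_nonneg _

lemma l2NormSq_iteratedDeriv_succ_le {m : ℕ} {f : ℝ → ℝ} (hf : ContDiff ℝ (m + 2 : ℕ) f)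
    {ε : ℝ} (hε : 0 < ε) (hε1 : ε ≤ 1) :
    l2NormSq (iteratedDeriv (m + 1) f) ≤
      1088 / ε * l2NormSq (iteratedDeriv m f) + 8 * ε * l2NormSq (iteratedDeriv (m + 2) f) :=
  integral_sq_deriv_le_of_le_sq (hf.hasDerivAt_iteratedDeriv (by omega))
    (hf.hasDerivAt_iteratedDeriv (by omega)) (hf.continuous_iteratedDeriv _ le_rfl)
    (by norm_num) hε (by norm_num [hε1])

lemma l2NormSq_iteratedDeriv_three_le (μ : ℝ) {f : ℝ → ℝ} (hf : ContDiff ℝ (3 : ℕ) f) :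
    l2NormSq (iteratedDeriv 3 f) ≤
      2 * l2NormSq (thirdOrderOp μ f) + 2 * μ ^ 2 * l2NormSq (iteratedDeriv 1 f) := by
  have hP : iteratedDeriv 3 f = fun x => thirdOrderOp μ f x + μ * iteratedDeriv 1 f x := by
    ext x
    simp only [thirdOrderOp, iteratedDeriv_one]
    ring
  rw [hP]
  exact l2NormSq_add_mul_le (hf.thirdOrderOp (m := 0)).continuous
    (hf.continuous_iteratedDeriv 1 (by norm_num)) μ

lemma sobolevNormSq_two_le {μ Λ β : ℝ} (hΛ : 1 ≤ Λ) (hμ : |μ| ≤ β * Λ) {f : ℝ → ℝ}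
    (hf : ContDiff ℝ (3 : ℕ) f) :
    sobolevNormSq 2 f ≤
      9 * (2176 * (1 + β ^ 2)) ^ 4 * (Λ ^ 2 * l2NormSq f + l2NormSq (thirdOrderOp μ f)) := by
  set b := 2176 * (1 + β ^ 2)
  have hb : 1088 ≤ b := by nlinarith [sq_nonneg β]
  have hμ2 : μ ^ 2 ≤ β ^ 2 * Λ ^ 2 := by
    rw [← sq_abs, ← mul_pow]
    exact pow_le_pow_left₀ (abs_nonneg μ) hμ 2
  have h₁ : ∀ ε, 0 < ε → ε ≤ 1 → l2NormSq (iteratedDeriv 1 f) ≤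
      b / ε * l2NormSq (iteratedDeriv 0 f) + b * ε * l2NormSq (iteratedDeriv 2 f) := by
    intro ε hε hε1
    refine (l2NormSq_iteratedDeriv_succ_le (m := 0) (hf.of_le (by norm_num)) hε hε1).trans ?_
    gcongr
    · exact l2NormSq_nonneg _
    · exact l2NormSq_nonneg _
    · linarith
  have h₂ : Λ * l2NormSq (iteratedDeriv 2 f) ≤
      b * Λ ^ 2 * l2NormSq (iteratedDeriv 1 f) + b * l2NormSq (thirdOrderOp μ f) := by
    have h := l2NormSq_iteratedDeriv_succ_le (m := 1) hf (inv_pos.2 (by linarith : 0 < Λ))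
      (inv_le_one_of_one_le₀ hΛ)
    have h₃ := l2NormSq_iteratedDeriv_three_le μ hf
    have e : Λ * (1088 / Λ⁻¹ * l2NormSq (iteratedDeriv 1 f)
          + 8 * Λ⁻¹ * l2NormSq (iteratedDeriv 3 f))
        = 1088 * Λ ^ 2 * l2NormSq (iteratedDeriv 1 f) + 8 * l2NormSq (iteratedDeriv 3 f) := by
      field_simp
    nlinarith [mul_le_mul_of_nonneg_left h (by linarith : 0 ≤ Λ),
      l2NormSq_nonneg (thirdOrderOp μ f),
      mul_le_mul_of_nonneg_right hμ2 (l2NormSq_nonneg (iteratedDeriv 1 f)),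
      mul_nonneg (sq_nonneg β) (mul_nonneg (sq_nonneg Λ) (l2NormSq_nonneg (iteratedDeriv 1 f))),
      mul_nonneg (sq_nonneg Λ) (l2NormSq_nonneg (iteratedDeriv 1 f))]
  have := sum_three_le_of_interpolation (by linarith) hΛ (l2NormSq_nonneg _)
    (l2NormSq_nonneg _) h₁ h₂
  simpa [sobolevNormSq, Finset.sum_range_succ] using this

noncomputable def opPowerSum (μ Λ : ℝ) (n : ℕ) (f : ℝ → ℝ) : ℝ :=
  ∑ i ∈ Finset.range (n + 1), Λ ^ (2 * n - 2 * i) * l2NormSq ((thirdOrderOp μ)^[i] f)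

lemma opPowerSum_succ (μ Λ : ℝ) (n : ℕ) (f : ℝ → ℝ) :
    opPowerSum μ Λ (n + 1) f
      = Λ ^ 2 * opPowerSum μ Λ n f + l2NormSq ((thirdOrderOp μ)^[n + 1] f) := by
  rw [opPowerSum, Finset.sum_range_succ, opPowerSum, Finset.mul_sum, Nat.sub_self, pow_zero,
    one_mul]
  congr 1
  refine Finset.sum_congr rfl fun i hi => ?_
  rw [← mul_assoc, ← pow_add]
  congr 2
  have := Finset.mem_range.1 hi
  omega

lemma opPowerSum_succ' (μ Λ : ℝ) (n : ℕ) (f : ℝ → ℝ) :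
    opPowerSum μ Λ (n + 1) f
      = opPowerSum μ Λ n (thirdOrderOp μ f) + Λ ^ (2 * (n + 1)) * l2NormSq f := by
  rw [opPowerSum, Finset.sum_range_succ', opPowerSum]
  simp only [Function.iterate_succ_apply, Function.iterate_zero_apply, Nat.mul_zero, Nat.sub_zero]
  congr 1
  refine Finset.sum_congr rfl fun i _ => ?_
  congr 2
  omega

section Induction

variable {μ Λ K : ℝ} (hK : 0 ≤ K) (hΛ : 1 ≤ Λ)
  (hbase : ∀ g : ℝ → ℝ, ContDiff ℝ (3 : ℕ) g →
    sobolevNormSq 2 g ≤ K * (Λ ^ 2 * l2NormSq g + l2NormSq (thirdOrderOp μ g)))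
include hK hΛ hbase

lemma sobolevNormSq_add_two_le {k : ℕ} {f : ℝ → ℝ} (hf : ContDiff ℝ (k + 3 : ℕ) f) :
    sobolevNormSq (k + 2) f ≤
      (K + 1) * (Λ ^ 2 * sobolevNormSq k f + sobolevNormSq k (thirdOrderOp μ f)) := by
  have hsplit : sobolevNormSq (k + 2) f = ∑ m ∈ Finset.range k, l2NormSq (iteratedDeriv m f)
      + sobolevNormSq 2 (iteratedDeriv k f) := by
    rw [sobolevNormSq, sobolevNormSq, show k + 2 + 1 = k + (2 + 1) by ring, Finset.sum_range_add]
    simp only [iteratedDeriv_iteratedDeriv, add_comm _ k]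
  have hlow : ∑ m ∈ Finset.range k, l2NormSq (iteratedDeriv m f) ≤ sobolevNormSq k f :=
    Finset.sum_le_sum_of_subset_of_nonneg (Finset.range_subset_range.2 k.le_succ)
      fun _ _ _ => l2NormSq_nonneg _
  have hhigh := hbase _ (ContDiff.iteratedDeriv' (m := 3) (by rwa [add_comm]))
  rw [← iteratedDeriv_thirdOrderOp hf] at hhigh
  have hS := mul_le_mul_of_nonneg_right (one_le_pow₀ hΛ : 1 ≤ Λ ^ 2) (sobolevNormSq_nonneg k f)
  calc sobolevNormSq (k + 2) f
      ≤ sobolevNormSq k f + K * (Λ ^ 2 * l2NormSq (iteratedDeriv k f)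
          + l2NormSq (iteratedDeriv k (thirdOrderOp μ f))) := by rw [hsplit]; gcongr
    _ ≤ sobolevNormSq k f
          + K * (Λ ^ 2 * sobolevNormSq k f + sobolevNormSq k (thirdOrderOp μ f)) := by
      gcongr <;> exact l2NormSq_iteratedDeriv_le_sobolevNormSq le_rfl _
    _ ≤ (K + 1) * (Λ ^ 2 * sobolevNormSq k f + sobolevNormSq k (thirdOrderOp μ f)) := by
      nlinarith [sobolevNormSq_nonneg k (thirdOrderOp μ f)]

lemma sobolevNormSq_le_opPowerSum (n : ℕ) {f : ℝ → ℝ} (hf : ContDiff ℝ (3 * n : ℕ) f) :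
    sobolevNormSq (2 * n) f ≤ (2 * (K + 1)) ^ n * opPowerSum μ Λ n f := by
  induction n generalizing f with
  | zero => simp [sobolevNormSq, opPowerSum]
  | succ n ih =>
    have hstep := sobolevNormSq_add_two_le hK hΛ hbase (k := 2 * n)
      (hf.of_le (by norm_cast; omega))
    have ihf := ih (hf.of_le (by norm_cast; omega))
    have ihP := ih (f := thirdOrderOp μ f)
      (ContDiff.thirdOrderOp (by rwa [show 3 * n + 3 = 3 * (n + 1) by ring]))
    have hT₁ : Λ ^ 2 * opPowerSum μ Λ n f ≤ opPowerSum μ Λ (n + 1) f := by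
      rw [opPowerSum_succ]
      linarith [l2NormSq_nonneg ((thirdOrderOp μ)^[n + 1] f)]
    have hT₂ : opPowerSum μ Λ n (thirdOrderOp μ f) ≤ opPowerSum μ Λ (n + 1) f := by
      rw [opPowerSum_succ']
      linarith [mul_nonneg (pow_nonneg (by linarith : 0 ≤ Λ) (2 * (n + 1))) (l2NormSq_nonneg f)]
    calc sobolevNormSq (2 * (n + 1)) f
        ≤ (K + 1) * (Λ ^ 2 * sobolevNormSq (2 * n) f
            + sobolevNormSq (2 * n) (thirdOrderOp μ f)) := hstep
      _ ≤ (K + 1) * (Λ ^ 2 * ((2 * (K + 1)) ^ n * opPowerSum μ Λ n f)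
            + (2 * (K + 1)) ^ n * opPowerSum μ Λ n (thirdOrderOp μ f)) := by gcongr
      _ = (K + 1) * (2 * (K + 1)) ^ n
            * (Λ ^ 2 * opPowerSum μ Λ n f + opPowerSum μ Λ n (thirdOrderOp μ f)) := by ring
      _ ≤ (K + 1) * (2 * (K + 1)) ^ n * (2 * opPowerSum μ Λ (n + 1) f) := by gcongr; linarith
      _ = (2 * (K + 1)) ^ (n + 1) * opPowerSum μ Λ (n + 1) f := by ring

end Induction

theorem sobolev_norm_le_powers_of_P_general (a : ℝ) :
    ∃ C₁ : ℝ, 1 ≤ C₁ ∧ ∀ n j : ℕ, 1 ≤ j → ∀ f : ℝ → ℝ, ContDiff ℝ (3*n : ℕ) f →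
      ∑ m ∈ Finset.range (2*n+1), (∫ x in (-1:ℝ)..0, (iteratedDeriv m f x)^2) ≤
        C₁^n * ∑ i ∈ Finset.range (n+1),
          (((j : ℝ) * Real.pi)^2)^(2*n - 2*i) *
            (∫ x in (-1:ℝ)..0,
              (((fun h : ℝ → ℝ => fun x =>
                  iteratedDeriv 3 h x - (((j : ℝ) * Real.pi)^2 - a) * deriv h x)^[i] f) x)^2) := by
  set K := 9 * (2176 * (1 + (1 + |a|) ^ 2)) ^ 4
  have hK : 0 ≤ K := by positivity
  refine ⟨2 * (K + 1), by linarith, fun n j hj f hf => ?_⟩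
  have hΛ : 1 ≤ ((j : ℝ) * Real.pi) ^ 2 := one_le_pow₀
    (one_le_mul_of_one_le_of_one_le (by exact_mod_cast hj) (by linarith [Real.pi_gt_three]))
  have hμ : |((j : ℝ) * Real.pi) ^ 2 - a| ≤ (1 + |a|) * ((j : ℝ) * Real.pi) ^ 2 := by
    have ha : |a| ≤ |a| * ((j : ℝ) * Real.pi) ^ 2 := le_mul_of_one_le_right (abs_nonneg a) hΛ
    exact abs_le.2 ⟨by linarith [le_abs_self a], by linarith [neg_abs_le a]⟩
  exact sobolevNormSq_le_opPowerSum hK hΛ (fun g hg => sobolevNormSq_two_le hΛ hμ hg) n hf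

theorem sobolev_norm_le_powers_of_P (a : ℝ) (ha : 0 ≤ a) :
    ∃ C₁ : ℝ, 1 ≤ C₁ ∧ ∀ n j : ℕ, 1 ≤ j → ∀ f : ℝ → ℝ, ContDiff ℝ (3*n : ℕ) f →
      ∑ m ∈ Finset.range (2*n+1), (∫ x in (-1:ℝ)..0, (iteratedDeriv m f x)^2) ≤
        C₁^n * ∑ i ∈ Finset.range (n+1),
          (((j : ℝ) * Real.pi)^2)^(2*n - 2*i) *
            (∫ x in (-1:ℝ)..0,
              (((fun h : ℝ → ℝ => fun x =>
                  iteratedDeriv 3 h x - (((j : ℝ) * Real.pi)^2 - a) * deriv h x)^[i] f) x)^2) :=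
  sobolev_norm_le_powers_of_P_general a
end

section
/- Let a ≥ 0, λ > 0, and suppose f ∈ H³(-1,0) satisfies f''' + (a - λ) f' = g with f(-1) = f(0) = f'(0) = 0, for some g ∈ L²(-1,0). Then λ · f'(-1)² / 2 = λ ∫_{-1}^0 f(x) g(x) dx. -/
/-!
Multiplying `f''' + c f' = g` by `f` gives an exact derivative:
`f (f''' + c f') = (f f'' - f'^2 / 2 + c f^2 / 2)'`. Integrating over `[-1, 0]`, the boundary
conditions kill every boundary term except `f'(-1)^2 / 2`.
-/

open Set

noncomputable def multiplierEnergy (c : ℝ) (f : ℝ → ℝ) (x : ℝ) : ℝ :=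
  f x * iteratedDeriv 2 f x - deriv f x ^ 2 / 2 + c * (f x ^ 2 / 2)

theorem hasDerivAt_multiplierEnergy (c : ℝ) {f : ℝ → ℝ} (hf : ContDiff ℝ 3 f) (x : ℝ) :
    HasDerivAt (multiplierEnergy c f)
      (f x * (iteratedDeriv 3 f x + c * deriv f x)) x := by
  have hasDerivAt_iteratedDeriv (k : ℕ) (hk : k < 3) :
      HasDerivAt (iteratedDeriv k f) (iteratedDeriv (k + 1) f x) x := by
    rw [iteratedDeriv_succ]
    exact ((hf.differentiable_iteratedDeriv k (by exact_mod_cast hk)) x).hasDerivAt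
  have h₀ := hasDerivAt_iteratedDeriv 0 (by norm_num)
  have h₁ := hasDerivAt_iteratedDeriv 1 (by norm_num)
  have h₂ := hasDerivAt_iteratedDeriv 2 (by norm_num)
  simp only [iteratedDeriv_zero, iteratedDeriv_one, Nat.reduceAdd] at h₀ h₁ h₂
  refine (((h₀.mul h₂).sub ((h₁.pow 2).div_const 2)).add
    (((h₀.pow 2).div_const 2).const_mul c)).congr_deriv ?_
  push_cast
  ring

theorem integral_mul_iteratedDeriv_three_add_eq_sub (c : ℝ) {f : ℝ → ℝ} (hf : ContDiff ℝ 3 f)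
    (u v : ℝ) :
    ∫ x in u..v, f x * (iteratedDeriv 3 f x + c * deriv f x) =
      multiplierEnergy c f v - multiplierEnergy c f u := by
  refine intervalIntegral.integral_eq_sub_of_hasDerivAt
    (fun x _ => hasDerivAt_multiplierEnergy c hf x) ?_
  refine Continuous.intervalIntegrable ?_ u v
  have hf' : Continuous (deriv f) := hf.continuous_deriv (by norm_num)
  exact hf.continuous.mul ((hf.continuous_iteratedDeriv 3 le_rfl).add (continuous_const.mul hf'))

theorem multiplier_identity_two_general (a lam : ℝ)
    (f g : ℝ → ℝ) (hf : ContDiff ℝ 3 f)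
    (heq : ∀ x ∈ Set.Icc (-1:ℝ) 0,
      iteratedDeriv 3 f x + (a - lam) * deriv f x = g x)
    (hb1 : f (-1) = 0) (hb2 : f 0 = 0) (hb3 : deriv f 0 = 0) :
    lam * (deriv f (-1))^2 / 2 = lam * ∫ x in (-1:ℝ)..0, f x * g x := by
  have hsubst : ∫ x in (-1:ℝ)..0, f x * g x =
      ∫ x in (-1:ℝ)..0, f x * (iteratedDeriv 3 f x + (a - lam) * deriv f x) := by
    refine intervalIntegral.integral_congr fun x hx => ?_
    rw [uIcc_of_le (by norm_num)] at hx
    simp only [heq x hx]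
  rw [hsubst, integral_mul_iteratedDeriv_three_add_eq_sub (a - lam) hf]
  simp only [multiplierEnergy, hb1, hb2, hb3]
  ring

theorem multiplier_identity_two (a lam : ℝ) (ha : 0 ≤ a) (hlam : 0 < lam)
    (f g : ℝ → ℝ) (hf : ContDiff ℝ 3 f) (hg : Continuous g)
    (heq : ∀ x ∈ Set.Icc (-1:ℝ) 0,
      iteratedDeriv 3 f x + (a - lam) * deriv f x = g x)
    (hb1 : f (-1) = 0) (hb2 : f 0 = 0) (hb3 : deriv f 0 = 0) :
    lam * (deriv f (-1))^2 / 2 = lam * ∫ x in (-1:ℝ)..0, f x * g x :=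
  multiplier_identity_two_general a lam f g hf heq hb1 hb2 hb3
end

section
/- Let a ≥ 0, λ > 0, and suppose f ∈ H³(-1,0) satisfies f''' + (a - λ) f' = g with f(-1) = f(0) = f'(0) = 0, for some g ∈ L²(-1,0). Then f''(-1) = -f'(-1) + (a - λ) ∫_{-1}^0 f(x) dx + ∫_{-1}^0 x g(x) dx. -/
open MeasureTheory

theorem multiplier_identity_three (a lam : ℝ) (ha : 0 ≤ a) (hlam : 0 < lam)
    (f g : ℝ → ℝ) (hf : ContDiff ℝ 3 f) (hg : Continuous g)
    (heq : ∀ x ∈ Set.Icc (-1:ℝ) 0,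
      iteratedDeriv 3 f x + (a - lam) * deriv f x = g x)
    (hb1 : f (-1) = 0) (hb2 : f 0 = 0) (hb3 : deriv f 0 = 0) :
    iteratedDeriv 2 f (-1) =
      -(deriv f (-1)) + (a - lam) * (∫ x in (-1:ℝ)..0, f x) +
        ∫ x in (-1:ℝ)..0, x * g x := by
  have h10 : (-1 : ℝ) ≤ 0 := by norm_num
  have hc0 : Continuous f := hf.continuous
  have hc1 : Continuous (deriv f) := by
    have := hf.continuous_iteratedDeriv 1 (by norm_num)
    simpa [iteratedDeriv_one] using this
  have hc2 : Continuous (iteratedDeriv 2 f) := hf.continuous_iteratedDeriv 2 (by norm_num)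
  have hc3 : Continuous (iteratedDeriv 3 f) := hf.continuous_iteratedDeriv 3 le_rfl
  have hd1 : ∀ x : ℝ, HasDerivAt f (deriv f x) x := fun x =>
    ((hf.differentiable (by norm_num)) x).hasDerivAt
  have hd2 : ∀ x : ℝ, HasDerivAt (deriv f) (iteratedDeriv 2 f x) x := by
    intro x
    have hdiff : Differentiable ℝ (iteratedDeriv 1 f) :=
      hf.differentiable_iteratedDeriv 1 (by norm_num)
    have := (hdiff x).hasDerivAt
    rw [iteratedDeriv_one] at hdiff this
    have h2 : iteratedDeriv 2 f x = deriv (deriv f) x := by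
      rw [show (2:ℕ) = 1 + 1 from rfl, iteratedDeriv_succ, iteratedDeriv_one]
    rw [h2]; exact this
  have hd3 : ∀ x : ℝ, HasDerivAt (iteratedDeriv 2 f) (iteratedDeriv 3 f x) x := by
    intro x
    have hdiff : Differentiable ℝ (iteratedDeriv 2 f) :=
      hf.differentiable_iteratedDeriv 2 (by norm_num)
    have := (hdiff x).hasDerivAt
    have h3 : iteratedDeriv 3 f x = deriv (iteratedDeriv 2 f) x := by
      rw [show (3:ℕ) = 2 + 1 from rfl, iteratedDeriv_succ]
    rw [h3]; exact this
  -- rewrite the g integral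
  have hcong : (∫ x in (-1:ℝ)..0, x * g x)
      = ∫ x in (-1:ℝ)..0, x * (iteratedDeriv 3 f x + (a - lam) * deriv f x) := by
    apply intervalIntegral.integral_congr
    intro x hx
    rw [Set.uIcc_of_le h10] at hx
    show x * g x = x * _
    rw [heq x hx]
  rw [hcong]
  have ibp3 : (∫ x in (-1:ℝ)..0, x * iteratedDeriv 3 f x)
      = 0 * iteratedDeriv 2 f 0 - (-1) * iteratedDeriv 2 f (-1)
        - ∫ x in (-1:ℝ)..0, 1 * iteratedDeriv 2 f x :=
    intervalIntegral.integral_mul_deriv_eq_deriv_mul (u := fun x : ℝ => x)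
      (u' := fun _ => (1:ℝ)) (v := iteratedDeriv 2 f) (v' := iteratedDeriv 3 f)
      (fun x _ => hasDerivAt_id x) (fun x _ => hd3 x)
      (continuous_const.intervalIntegrable _ _) (hc3.intervalIntegrable _ _)
  have int2 : (∫ x in (-1:ℝ)..0, iteratedDeriv 2 f x) = deriv f 0 - deriv f (-1) := by
    apply intervalIntegral.integral_eq_sub_of_hasDerivAt
    · intro x _; exact hd2 x
    · exact hc2.intervalIntegrable _ _
  have ibp1 : (∫ x in (-1:ℝ)..0, x * deriv f x)
      = 0 * f 0 - (-1) * f (-1) - ∫ x in (-1:ℝ)..0, 1 * f x :=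
    intervalIntegral.integral_mul_deriv_eq_deriv_mul (u := fun x : ℝ => x)
      (u' := fun _ => (1:ℝ)) (v := f) (v' := deriv f)
      (fun x _ => hasDerivAt_id x) (fun x _ => hd1 x)
      (continuous_const.intervalIntegrable _ _) (hc1.intervalIntegrable _ _)
  have hsplit : (∫ x in (-1:ℝ)..0, x * (iteratedDeriv 3 f x + (a - lam) * deriv f x))
      = (∫ x in (-1:ℝ)..0, x * iteratedDeriv 3 f x)
        + (a - lam) * ∫ x in (-1:ℝ)..0, x * deriv f x := by
    rw [← intervalIntegral.integral_const_mul, ← intervalIntegral.integral_add]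
    · congr 1; ext x; ring
    · exact (continuous_id.mul hc3).intervalIntegrable _ _
    · exact (continuous_const.mul (continuous_id.mul hc1)).intervalIntegrable _ _
  rw [hsplit, ibp3, ibp1]
  simp only [one_mul] at *
  rw [int2, hb1, hb2, hb3]
  ring
end

section
/- Let R > 1, σ ∈ (0,1), and define α = sup_{k≥0} (k+2)/(R^{1-σ})^{k+1}. Then α is finite, and for every N ∈ ℕ, ∑_{k=0}^∞ (k+1)(k+2)⋯(k+N) / R^{k+N} ≤ C (αe/R^σ)^N N! √(N) for some constant C independent of N (with the convention that the empty product for N=0 is 1 and the right side is replaced by C). -/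
/-!
At `x = 1/R` the series is `∑ (k+N)!/k! · x^(k+N) = N! x^N / (1 - x)^(N+1) = R/(R-1) · N! · (R-1)^(-N)`,
so with `C = R/(R-1) = ∑ R^(-k)` everything reduces to `1/(R-1) ≤ α e / R^σ`. Writing `r = R^(1-σ)`,
so that `R^σ = R/r`, this is `R/r ≤ α e (R-1)`, and a single term of the supremum defining `α`
already gives it: for `k = ⌊1/log r⌋` we have `r^k ≤ e`, while `(k+1)(R-1) ≥ (k+1) log r ≥ 1`
because `log r ≤ log R ≤ R - 1`.
-/

open Nat Real

theorem hasSum_factorial_div_factorial_mul_geometric {𝕜 : Type*} [NormedField 𝕜] [CharZero 𝕜]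
    (N : ℕ) {x : 𝕜} (hx : ‖x‖ < 1) :
    HasSum (fun k : ℕ => ((k + N)! / k ! : 𝕜) * x ^ (k + N)) (N ! * x ^ N / (1 - x) ^ (N + 1)) := by
  have term (k : ℕ) :
      ((k + N)! / k ! : 𝕜) * x ^ (k + N) = N ! * x ^ N * ((k + N).choose N * x ^ k) := by
    rw [← Nat.choose_mul_factorial_mul_factorial (Nat.le_add_left N k), Nat.add_sub_cancel]
    have : (k ! : 𝕜) ≠ 0 := by exact_mod_cast k.factorial_ne_zero
    push_cast
    field_simp
    ring
  simpa only [term, mul_one_div] using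
    (hasSum_choose_mul_geometric_of_norm_lt_one N hx).mul_left ((N ! : 𝕜) * x ^ N)

theorem tsum_factorial_div_factorial_div_pow {R : ℝ} (hR : 1 < R) (N : ℕ) :
    ∑' k : ℕ, (((k + N)! : ℝ) / k !) / R ^ (k + N) = R / (R - 1) * (1 / (R - 1)) ^ N * N ! := by
  have hx : ‖1 / R‖ < 1 := by
    rw [norm_div, norm_one, Real.norm_of_nonneg (by linarith), div_lt_one (by linarith)]
    exact hR
  have hR0 : R ≠ 0 := by linarith
  have hR1 : R - 1 ≠ 0 := by linarith
  have term (k : ℕ) : (((k + N)! : ℝ) / k !) / R ^ (k + N)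
      = (((k + N)! : ℝ) / k !) * (1 / R) ^ (k + N) := by
    rw [one_div_pow, mul_one_div]
  rw [tsum_congr term, (hasSum_factorial_div_factorial_mul_geometric N hx).tsum_eq,
    one_sub_div hR0, div_pow, div_pow, div_pow]
  field_simp
  ring

theorem tsum_one_div_pow {R : ℝ} (hR : 1 < R) : ∑' k : ℕ, 1 / R ^ k = R / (R - 1) := by
  simp_rw [← one_div_pow]
  rw [tsum_geometric_of_lt_one (by positivity) ((div_lt_one (by linarith)).2 hR)]
  have : R - 1 ≠ 0 := by linarith
  field_simp

theorem add_two_div_pow_succ_le {r : ℝ} (hr : 1 < r) (k : ℕ) :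
    ((k : ℝ) + 2) / r ^ (k + 1) ≤ 2 / (r - 1) := by
  have hr1 : 0 < r - 1 := by linarith
  have bernoulli : ((k : ℝ) + 1) * (r - 1) ≤ r ^ (k + 1) := by
    have := one_add_mul_le_pow (by linarith : (-2 : ℝ) ≤ r - 1) (k + 1)
    rw [add_sub_cancel] at this
    push_cast at this
    linarith
  calc ((k : ℝ) + 2) / r ^ (k + 1) ≤ ((k : ℝ) + 2) / (((k : ℝ) + 1) * (r - 1)) := by
        gcongr
    _ ≤ 2 / (r - 1) := by
        rw [div_le_div_iff₀ (by positivity) hr1]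
        nlinarith

theorem bddAbove_range_add_two_div_pow_succ {r : ℝ} (hr : 1 < r) :
    BddAbove (Set.range fun k : ℕ => ((k : ℝ) + 2) / r ^ (k + 1)) :=
  ⟨2 / (r - 1), by rintro _ ⟨k, rfl⟩; exact add_two_div_pow_succ_le hr k⟩

theorem exists_pow_le_exp_one_one_le_succ_mul_log {r : ℝ} (hr : 1 < r) :
    ∃ k : ℕ, r ^ k ≤ exp 1 ∧ 1 ≤ (k + 1) * log r := by
  have hlog : 0 < log r := log_pos hr
  set k := ⌊(log r)⁻¹⌋₊
  refine ⟨k, ?_, ?_⟩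
  · rw [← exp_log (by linarith : 0 < r), ← exp_nat_mul, exp_le_exp]
    calc (k : ℝ) * log r ≤ (log r)⁻¹ * log r := by gcongr; exact floor_le (by positivity)
      _ = 1 := inv_mul_cancel₀ hlog.ne'
  · calc 1 = (log r)⁻¹ * log r := (inv_mul_cancel₀ hlog.ne').symm
      _ ≤ (k + 1) * log r := by gcongr; exact (lt_floor_add_one _).le

theorem div_le_iSup_add_two_div_pow_succ_mul {r R : ℝ} (hr : 1 < r) (hrR : r ≤ R) :
    R / r ≤ (⨆ k : ℕ, ((k : ℝ) + 2) / r ^ (k + 1)) * exp 1 * (R - 1) := by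
  obtain ⟨k, hpow, hlog⟩ := exists_pow_le_exp_one_one_le_succ_mul_log hr
  have hr0 : 0 < r := by linarith
  have hR1 : 0 < R - 1 := by linarith
  have hR : R ≤ (k + 2) * (R - 1) := by
    have : log r ≤ R - 1 := (log_le_log hr0 hrR).trans (log_le_sub_one_of_pos (by linarith))
    nlinarith
  calc R / r ≤ (k + 2) * (R - 1) / r := by gcongr
    _ ≤ (k + 2) * (R - 1) * (exp 1 / r ^ k) / r := by
        gcongr ?_ / _
        exact le_mul_of_one_le_right (by positivity) ((one_le_div (by positivity)).2 hpow)
    _ = ((k : ℝ) + 2) / r ^ (k + 1) * exp 1 * (R - 1) := by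
        rw [pow_succ]; field_simp
    _ ≤ (⨆ k : ℕ, ((k : ℝ) + 2) / r ^ (k + 1)) * exp 1 * (R - 1) := by
        gcongr
        exact le_ciSup (bddAbove_range_add_two_div_pow_succ hr) k

theorem gevrey_sum_estimate (R σ : ℝ) (hR : 1 < R) (hσ : σ ∈ Set.Ioo (0:ℝ) 1) :
    BddAbove (Set.range fun k : ℕ => ((k : ℝ) + 2) / (R ^ ((1:ℝ) - σ)) ^ (k + 1)) ∧
    ∃ C : ℝ, 0 < C ∧ (∑' k : ℕ, (1:ℝ) / R ^ k ≤ C) ∧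
      ∀ N : ℕ, 1 ≤ N →
        ∑' k : ℕ, (((k + N)! : ℝ) / (k ! : ℝ)) / R ^ (k + N) ≤
          C * ((⨆ k : ℕ, ((k : ℝ) + 2) / (R ^ ((1:ℝ) - σ)) ^ (k + 1)) *
                Real.exp 1 / R ^ σ) ^ N * (N ! : ℝ) * Real.sqrt N := by
  obtain ⟨hσ0, hσ1⟩ := hσ
  have hR0 : 0 < R := by linarith
  have hR1 : 0 < R - 1 := by linarith
  have hRσ : R ^ σ = R / R ^ (1 - σ) := by rw [rpow_sub hR0, rpow_one, div_div_cancel₀ hR0.ne']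
  set r := R ^ (1 - σ)
  set α := ⨆ k : ℕ, ((k : ℝ) + 2) / r ^ (k + 1)
  have hr : 1 < r := one_lt_rpow hR (by linarith)
  have hrR : r ≤ R := by simpa using rpow_le_rpow_of_exponent_le hR.le (by linarith : 1 - σ ≤ 1)
  have hbase : 1 / (R - 1) ≤ α * exp 1 / R ^ σ := by
    rw [hRσ, div_le_div_iff₀ hR1 (by positivity), one_mul]
    linarith [div_le_iSup_add_two_div_pow_succ_mul hr hrR]
  have hα : 0 ≤ α * exp 1 / R ^ σ := (one_div_pos.2 hR1).le.trans hbase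
  refine ⟨bddAbove_range_add_two_div_pow_succ hr, R / (R - 1), by positivity,
    (tsum_one_div_pow hR).le, fun N hN => ?_⟩
  have hsqrt : 1 ≤ √(N : ℝ) := one_le_sqrt.2 (by exact_mod_cast hN)
  calc ∑' k : ℕ, (((k + N)! : ℝ) / k !) / R ^ (k + N)
      = R / (R - 1) * (1 / (R - 1)) ^ N * N ! * 1 := by
        rw [tsum_factorial_div_factorial_div_pow hR N, mul_one]
    _ ≤ R / (R - 1) * (α * exp 1 / R ^ σ) ^ N * N ! * √N := by gcongr
end
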